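/- arXiv:math/0404466 — 4 statements merged into one kernel-verified Lean document; each statement's English description precedes it below -/
import Mathlib

section
/- Let V₂ be the directed graph with two vertices v₀, v₁ and no edges. Then the universal operator algebra OA(V₂) is completely isometrically isomorphic to the unamalgamated universal operator-algebraic free product ℂ * ℂ; in particular OA(V₂) is not isomorphic to ℂ ⊕ ℂ. -/
noncomputable section

open scoped Classical

/-! ## Operator algebras, concretely represented -/

/-- A (concrete) operator algebra: a norm-closed subalgebra of the bounded
operators on a complex Hilbert space. -/
structure OpAlg where
  H : Type
  [nacg : NormedAddCommGroup H]
  [ips : InnerProductSpace ℂ H]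
  [cs : CompleteSpace H]
  carrier : NonUnitalSubalgebra ℂ (H →L[ℂ] H)
  isClosed : IsClosed (carrier : Set (H →L[ℂ] H))

attribute [instance] OpAlg.nacg OpAlg.ips OpAlg.cs

/-- The amplification of an `n × n` matrix of operators on `H` to an operator on
`H ⊕₂ ⋯ ⊕₂ H` (`n` summands, with the Hilbert space norm). -/
def matAmp {H : Type} [NormedAddCommGroup H] [InnerProductSpace ℂ H]
    {n : ℕ} (a : Matrix (Fin n) (Fin n) (H →L[ℂ] H)) :
    (PiLp 2 fun _ : Fin n => H) →L[ℂ] (PiLp 2 fun _ : Fin n => H) :=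
  ((PiLp.continuousLinearEquiv 2 ℂ fun _ : Fin n => H).symm.toContinuousLinearMap.comp
    (ContinuousLinearMap.pi fun i => ∑ j, (a i j).comp (ContinuousLinearMap.proj j))).comp
    (PiLp.continuousLinearEquiv 2 ℂ fun _ : Fin n => H).toContinuousLinearMap

/-- The matrix norm of a matrix over a concrete operator algebra. -/
def matNorm (A : OpAlg) {n : ℕ} (a : Matrix (Fin n) (Fin n) A.carrier) : ℝ :=
  ‖matAmp fun i j => (a i j : A.H →L[ℂ] A.H)‖

/-- A completely contractive homomorphism of operator algebras. -/
structure CCHom (A B : OpAlg) where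
  toHom : A.carrier →ₙₐ[ℂ] B.carrier
  completelyContractive : ∀ (n : ℕ) (a : Matrix (Fin n) (Fin n) A.carrier),
    matNorm B (fun i j => toHom (a i j)) ≤ matNorm A a

/-- A completely isometric homomorphism. -/
def CCHom.CompletelyIsometric {A B : OpAlg} (φ : CCHom A B) : Prop :=
  ∀ (n : ℕ) (a : Matrix (Fin n) (Fin n) A.carrier),
    matNorm B (fun i j => φ.toHom (a i j)) = matNorm A a

/-- Two operator algebras are completely isometrically isomorphic if there is a
bijective completely isometric homomorphism between them. -/
def CIIso (A B : OpAlg) : Prop :=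
  ∃ φ : CCHom A B, Function.Bijective φ.toHom ∧ φ.CompletelyIsometric

/-! ## Directed graphs -/

/-- A directed graph: vertices, edges, and source and range maps. -/
structure DiGraph where
  V : Type
  E : Type
  s : E → V
  r : E → V

/-- A contractive representation of a directed graph in an operator algebra:
vertices go to (self-adjoint) projections, edges go to contractions, compatibly
with the range and source maps. -/
structure GraphRep (Q : DiGraph) (A : OpAlg) where
  v : Q.V → A.carrier
  e : Q.E → A.carrier
  idem : ∀ x, v x * v x = v x
  selfAdjoint : ∀ x, IsSelfAdjoint (v x : A.H →L[ℂ] A.H)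
  contractive : ∀ x, ‖(e x : A.H →L[ℂ] A.H)‖ ≤ 1
  range_mul : ∀ x, v (Q.r x) * e x = e x
  mul_source : ∀ x, e x * v (Q.s x) = e x

/-- The representation generates the operator algebra. -/
def GraphRep.Generates {Q : DiGraph} {A : OpAlg} (ρ : GraphRep Q A) : Prop :=
  closure ((NonUnitalAlgebra.adjoin ℂ (Set.range ρ.v ∪ Set.range ρ.e) :
    NonUnitalSubalgebra ℂ A.carrier) : Set A.carrier) = Set.univ

/-- A homomorphism extends (intertwines) two representations of the same graph. -/
def ExtendsRep {Q : DiGraph} {A B : OpAlg} (ψ : CCHom A B)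
    (ρ : GraphRep Q A) (σ : GraphRep Q B) : Prop :=
  (∀ x, ψ.toHom (ρ.v x) = σ.v x) ∧ (∀ x, ψ.toHom (ρ.e x) = σ.e x)

/-- `(A, ι)` is *the* universal operator algebra of the directed graph `Q`:
`ι` generates, and every contractive representation of `Q` factors uniquely
through a completely contractive homomorphism. -/
def IsUniversalOA (Q : DiGraph) (A : OpAlg) (ι : GraphRep Q A) : Prop :=
  ι.Generates ∧
    ∀ (B : OpAlg) (σ : GraphRep Q B), ∃! ψ : CCHom A B, ExtendsRep ψ ι σ


/-! ## Statement 1 specific definitions -/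

/-- The graph `V₂`: two vertices and no edges. -/
def V2 : DiGraph := ⟨Fin 2, Empty, Empty.elim, Empty.elim⟩

/-- The complex numbers, as a (one-dimensional) concrete operator algebra. -/
def oneDimC : OpAlg where
  H := ℂ
  carrier := ⊤
  isClosed := by
    have : ((⊤ : NonUnitalSubalgebra ℂ (ℂ →L[ℂ] ℂ)) : Set (ℂ →L[ℂ] ℂ)) = Set.univ := rfl
    rw [this]; exact isClosed_univ

/-- `(F, iA, iB)` is the (unamalgamated) universal operator-algebraic free product
of `A` and `B`: the canonical maps are completely isometric, their ranges generate,
and pairs of completely contractive homomorphisms out of `A` and `B` factor uniquely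
through `F`. -/
def IsFreeProduct (A B F : OpAlg) (iA : CCHom A F) (iB : CCHom B F) : Prop :=
  iA.CompletelyIsometric ∧ iB.CompletelyIsometric ∧
  closure ((NonUnitalAlgebra.adjoin ℂ (Set.range iA.toHom ∪ Set.range iB.toHom) :
    NonUnitalSubalgebra ℂ F.carrier) : Set F.carrier) = Set.univ ∧
  ∀ (C : OpAlg) (φA : CCHom A C) (φB : CCHom B C),
    ∃! ψ : CCHom F C, (∀ a, ψ.toHom (iA.toHom a) = φA.toHom a) ∧
      (∀ b, ψ.toHom (iB.toHom b) = φB.toHom b)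

/-- An operator algebra is a copy of `ℂ ⊕ ℂ` if it is linearly spanned by two nonzero
mutually orthogonal self-adjoint projections. -/
def IsCplusC (D : OpAlg) : Prop :=
  ∃ p q : D.carrier,
    p * p = p ∧ q * q = q ∧
    IsSelfAdjoint (p : D.H →L[ℂ] D.H) ∧ IsSelfAdjoint (q : D.H →L[ℂ] D.H) ∧
    p ≠ 0 ∧ q ≠ 0 ∧ p * q = 0 ∧ q * p = 0 ∧
    ∀ x : D.carrier, ∃ a b : ℂ, x = a • p + b • q
/-! ## Auxiliary lemmas -/

section AuxLemmas
set_option synthInstance.maxHeartbeats 1000000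
set_option maxHeartbeats 1000000
set_option linter.unusedSectionVars false
set_option linter.unusedVariables false

variable {H : Type} [NormedAddCommGroup H] [InnerProductSpace ℂ H]

lemma matAmp_apply {n : ℕ} (a : Matrix (Fin n) (Fin n) (H →L[ℂ] H))
    (x : PiLp 2 fun _ : Fin n => H) (i : Fin n) :
    matAmp a x i = ∑ j, a i j (x j) := by
  simp [matAmp, ContinuousLinearMap.sum_apply]

lemma pilp_norm_sq {n : ℕ} (x : PiLp 2 fun _ : Fin n => H) : ‖x‖ ^ 2 = ∑ i, ‖x i‖ ^ 2 :=
  PiLp.norm_sq_eq_of_L2 _ x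

lemma sq_le_imp {a b : ℝ} (ha : 0 ≤ a) (hb : 0 ≤ b) (h : a ^ 2 ≤ b ^ 2) : a ≤ b := by
  nlinarith

lemma pilp_one_norm (v : PiLp 2 fun _ : Fin 1 => H) : ‖v‖ = ‖v 0‖ := by
  have h := pilp_norm_sq v
  simp only [Fin.sum_univ_one] at h
  nlinarith [norm_nonneg v, norm_nonneg (v 0)]

lemma matAmp_norm_one (a : Matrix (Fin 1) (Fin 1) (H →L[ℂ] H)) :
    ‖matAmp a‖ = ‖a 0 0‖ := by
  apply le_antisymm
  · refine ContinuousLinearMap.opNorm_le_bound _ (ContinuousLinearMap.opNorm_nonneg _) fun x => ?_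
    rw [pilp_one_norm, matAmp_apply]
    simp only [Fin.sum_univ_one]
    calc ‖a 0 0 (x 0)‖ ≤ ‖a 0 0‖ * ‖x 0‖ := (a 0 0).le_opNorm _
    _ = ‖a 0 0‖ * ‖x‖ := by rw [pilp_one_norm]
  · refine ContinuousLinearMap.opNorm_le_bound _ (ContinuousLinearMap.opNorm_nonneg _) fun ξ => ?_
    set y : PiLp 2 (fun _ : Fin 1 => H) := WithLp.toLp 2 (fun _ => ξ) with hy
    have h1 : a 0 0 ξ = matAmp a y 0 := by
      rw [matAmp_apply]; simp [hy]
    have h2 : ‖y‖ = ‖ξ‖ := pilp_one_norm y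
    rw [h1]
    calc ‖matAmp a y 0‖ = ‖matAmp a y‖ := (pilp_one_norm _).symm
    _ ≤ ‖matAmp a‖ * ‖y‖ := (matAmp a).le_opNorm _
    _ = ‖matAmp a‖ * ‖ξ‖ := by rw [h2]

lemma matNorm_single (A : OpAlg) (t : A.carrier) :
    matNorm A (fun _ _ : Fin 1 => t) = ‖(t : A.H →L[ℂ] A.H)‖ :=
  matAmp_norm_one _

end AuxLemmas
section AuxSA
set_option synthInstance.maxHeartbeats 1000000
set_option maxHeartbeats 1000000

variable {H : Type} [NormedAddCommGroup H] [InnerProductSpace ℂ H] [CompleteSpace H]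

lemma norm_le_one_of_sa_idem {p : H →L[ℂ] H} (hidem : p * p = p)
    (hsa : IsSelfAdjoint p) : ‖p‖ ≤ 1 := by
  refine ContinuousLinearMap.opNorm_le_bound _ zero_le_one fun x => ?_
  rw [one_mul]
  have hsym := ContinuousLinearMap.isSelfAdjoint_iff_isSymmetric.mp hsa
  have hpp : p (p x) = p x := by rw [← ContinuousLinearMap.mul_apply, hidem]
  have h1 : (inner ℂ (p x) (p x) : ℂ) = inner ℂ x (p x) := by
    calc (inner ℂ (p x) (p x) : ℂ) = inner ℂ x (p (p x)) := hsym x (p x)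
    _ = inner ℂ x (p x) := by rw [hpp]
  have h2 : ‖p x‖ ^ 2 = Complex.re (inner ℂ x (p x) : ℂ) := by
    rw [← h1]
    exact (inner_self_eq_norm_sq (𝕜 := ℂ) (p x)).symm
  have h3 : Complex.re (inner ℂ x (p x) : ℂ) ≤ ‖x‖ * ‖p x‖ := by
    calc Complex.re (inner ℂ x (p x) : ℂ) ≤ ‖(inner ℂ x (p x) : ℂ)‖ := Complex.re_le_norm _
    _ ≤ ‖x‖ * ‖p x‖ := norm_inner_le_norm x (p x)
  nlinarith [norm_nonneg (p x), norm_nonneg x]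

lemma isSelfAdjoint_of_idem_norm_le_one {t : H →L[ℂ] H}
    (hidem : t * t = t) (hn : ‖t‖ ≤ 1) : IsSelfAdjoint t := by
  have htt : ∀ x, t (t x) = t x := fun x => by
    rw [← ContinuousLinearMap.mul_apply, hidem]
  have key : ∀ m w : H, t m = m → t w = 0 → (inner ℂ m w : ℂ) = 0 := by
    intro m w hm hw0
    set z : ℂ := inner ℂ m w with hz
    set ε : ℝ := 1 / (‖w‖ ^ 2 + 1) with hε
    have hεpos : 0 < ε := by positivity
    set c : ℂ := -(ε : ℂ) * (starRingEnd ℂ) z with hc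
    have hfix : t (m + c • w) = m := by rw [map_add, map_smul, hm, hw0, smul_zero, add_zero]
    have hnorm : ‖m‖ ≤ ‖m + c • w‖ := by
      calc ‖m‖ = ‖t (m + c • w)‖ := by rw [hfix]
      _ ≤ ‖t‖ * ‖m + c • w‖ := t.le_opNorm _
      _ ≤ 1 * ‖m + c • w‖ := mul_le_mul_of_nonneg_right hn (norm_nonneg _)
      _ = ‖m + c • w‖ := one_mul _
    have hexp : ‖m + c • w‖ ^ 2 = ‖m‖ ^ 2 + 2 * Complex.re (c * z) + (‖c‖ * ‖w‖) ^ 2 := by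
      rw [norm_add_sq (𝕜 := ℂ), inner_smul_right, norm_smul]
      norm_num
      rfl
    have hcz : Complex.re (c * z) = -(ε * ‖z‖ ^ 2) := by
      have hcv : c * z = ((-(ε * ‖z‖ ^ 2) : ℝ) : ℂ) := by
        rw [hc, mul_assoc, RCLike.conj_mul]; push_cast; ring_nf; rfl
      rw [hcv, Complex.ofReal_re]
    have hcn : ‖c‖ = ε * ‖z‖ := by
      rw [hc, norm_mul, norm_neg, RCLike.norm_conj]
      simp [abs_of_pos hεpos]
    have h2 : ‖m‖ ^ 2 ≤ ‖m + c • w‖ ^ 2 := by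
      nlinarith [norm_nonneg m, norm_nonneg (m + c • w)]
    have hεeq : ε * (‖w‖ ^ 2 + 1) = 1 := by
      rw [hε]; field_simp
    have key1 : 2 * (ε * ‖z‖ ^ 2) ≤ (ε * ‖z‖) ^ 2 * ‖w‖ ^ 2 := by
      rw [hcz, hcn] at hexp
      nlinarith [h2, hexp]
    have key2 : ε * ‖w‖ ^ 2 = 1 - ε := by nlinarith [hεeq]
    have e4 : (ε * ‖z‖) ^ 2 * ‖w‖ ^ 2 = ε * ‖z‖ ^ 2 * (ε * ‖w‖ ^ 2) := by ring
    rw [key2] at e4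
    have hfin : ε * ‖z‖ ^ 2 * (1 + ε) ≤ 0 := by nlinarith [key1, e4]
    have hz2 : ‖z‖ ^ 2 ≤ 0 := by
      by_contra hpos
      push_neg at hpos
      have h5 : 0 < ε * ‖z‖ ^ 2 * (1 + ε) :=
        mul_pos (mul_pos hεpos hpos) (by linarith)
      linarith
    have : ‖z‖ = 0 := by nlinarith [norm_nonneg z]
    rw [hz] at this ⊢
    exact norm_eq_zero.mp this
  rw [ContinuousLinearMap.isSelfAdjoint_iff_isSymmetric]
  intro x y
  have hker : ∀ u, t (u - t u) = 0 := fun u => by rw [map_sub, htt, sub_self]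
  have h1 : (inner ℂ (t x) (y - t y) : ℂ) = 0 := key _ _ (htt x) (hker y)
  have h2 : (inner ℂ (t y) (x - t x) : ℂ) = 0 := key _ _ (htt y) (hker x)
  have h2' : (inner ℂ (x - t x) (t y) : ℂ) = 0 := by
    rw [← inner_conj_symm, h2, map_zero]
  calc (inner ℂ (t x) y : ℂ) = inner ℂ (t x) (t y + (y - t y)) := by
        rw [show t y + (y - t y) = y by abel]
  _ = inner ℂ (t x) (t y) + inner ℂ (t x) (y - t y) := inner_add_right _ _ _
  _ = inner ℂ (t x) (t y) := by rw [h1, add_zero]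
  _ = inner ℂ (t x) (t y) + inner ℂ (x - t x) (t y) := by rw [h2', add_zero]
  _ = inner ℂ (t x + (x - t x)) (t y) := (inner_add_left _ _ _).symm
  _ = inner ℂ x (t y) := by rw [show t x + (x - t x) = x by abel]

end AuxSA
section AuxAmp
set_option synthInstance.maxHeartbeats 1000000
set_option maxHeartbeats 1000000
set_option linter.unusedSectionVars false

variable {H : Type} [NormedAddCommGroup H] [InnerProductSpace ℂ H]

lemma pilp_sum_apply {ι κ : Type} [DecidableEq ι] {G : Type} [NormedAddCommGroup G]
    (t : Finset ι) (v : ι → PiLp 2 fun _ : κ => G) (s : κ) :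
    (∑ j ∈ t, v j) s = ∑ j ∈ t, v j s := by
  induction t using Finset.induction with
  | empty => simp
  | insert a u h ih => rw [Finset.sum_insert h, Finset.sum_insert h, ← ih]; rfl

/-- The scalar amplification. -/
def scalarAmp {n : ℕ} (α : Matrix (Fin n) (Fin n) ℂ) :
    (PiLp 2 fun _ : Fin n => ℂ) →L[ℂ] (PiLp 2 fun _ : Fin n => ℂ) :=
  matAmp fun i j => α i j • (1 : ℂ →L[ℂ] ℂ)

lemma scalarAmp_apply {n : ℕ} (α : Matrix (Fin n) (Fin n) ℂ)
    (u : PiLp 2 fun _ : Fin n => ℂ) (i : Fin n) :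
    scalarAmp α u i = ∑ j, α i j * u j := by
  rw [scalarAmp]; refine (matAmp_apply _ u i).trans ?_
  simp [smul_eq_mul]

lemma euclid_case {n m : ℕ} (α : Matrix (Fin n) (Fin n) ℂ)
    (X : Fin n → EuclideanSpace ℂ (Fin m)) :
    ∑ i, ‖∑ j, α i j • X j‖ ^ 2 ≤ ‖scalarAmp α‖ ^ 2 * ∑ j, ‖X j‖ ^ 2 := by
  have happly : ∀ (i : Fin n) (s : Fin m), (∑ j, α i j • X j) s = ∑ j, α i j * X j s := by
    intro i s
    rw [pilp_sum_apply]
    refine Finset.sum_congr rfl fun j _ => rfl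
  have hXsum : ∀ i, ‖∑ j, α i j • X j‖ ^ 2 = ∑ s, ‖∑ j, α i j * X j s‖ ^ 2 := fun i => by
    rw [pilp_norm_sq]
    exact Finset.sum_congr rfl fun s _ => by rw [happly]
  have hu : ∀ s : Fin m, ∑ i, ‖∑ j, α i j * X j s‖ ^ 2 ≤ ‖scalarAmp α‖ ^ 2 * ∑ j, ‖X j s‖ ^ 2 := by
    intro s
    set u : PiLp 2 (fun _ : Fin n => ℂ) := WithLp.toLp 2 (fun j => X j s) with hudef
    have h1 : ‖scalarAmp α u‖ ≤ ‖scalarAmp α‖ * ‖u‖ := (scalarAmp α).le_opNorm u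
    have h2 : ‖scalarAmp α u‖ ^ 2 = ∑ i, ‖∑ j, α i j * u j‖ ^ 2 := by
      rw [pilp_norm_sq]
      exact Finset.sum_congr rfl fun i _ => by rw [scalarAmp_apply]
    have h3 : ‖u‖ ^ 2 = ∑ j, ‖u j‖ ^ 2 := pilp_norm_sq u
    have h4 : ‖scalarAmp α u‖ ^ 2 ≤ ‖scalarAmp α‖ ^ 2 * ‖u‖ ^ 2 := by
      nlinarith [norm_nonneg (scalarAmp α u), norm_nonneg u, (scalarAmp α).opNorm_nonneg]
    rw [h2, h3] at h4
    exact h4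
  calc ∑ i, ‖∑ j, α i j • X j‖ ^ 2 = ∑ i, ∑ s, ‖∑ j, α i j * X j s‖ ^ 2 :=
        Finset.sum_congr rfl fun i _ => hXsum i
  _ = ∑ s, ∑ i, ‖∑ j, α i j * X j s‖ ^ 2 := Finset.sum_comm
  _ ≤ ∑ s, ‖scalarAmp α‖ ^ 2 * ∑ j, ‖X j s‖ ^ 2 := Finset.sum_le_sum fun s _ => hu s
  _ = ‖scalarAmp α‖ ^ 2 * ∑ s, ∑ j, ‖X j s‖ ^ 2 := by rw [Finset.mul_sum]
  _ = ‖scalarAmp α‖ ^ 2 * ∑ j, ∑ s, ‖X j s‖ ^ 2 := by rw [Finset.sum_comm]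
  _ = ‖scalarAmp α‖ ^ 2 * ∑ j, ‖X j‖ ^ 2 := by
        congr 1
        exact Finset.sum_congr rfl fun j _ => (pilp_norm_sq (X j)).symm

lemma sum_sq_le {n : ℕ} (α : Matrix (Fin n) (Fin n) ℂ) (w : Fin n → H) :
    ∑ i, ‖∑ j, α i j • w j‖ ^ 2 ≤ ‖scalarAmp α‖ ^ 2 * ∑ j, ‖w j‖ ^ 2 := by
  set W := Submodule.span ℂ (Set.range w) with hW
  haveI : FiniteDimensional ℂ W := FiniteDimensional.span_of_finite ℂ (Set.finite_range w)
  set B := stdOrthonormalBasis ℂ W with hB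
  set w' : Fin n → W := fun j => ⟨w j, Submodule.subset_span ⟨j, rfl⟩⟩ with hw'
  set X := fun j => B.repr (w' j) with hX
  have hnx : ∀ j, ‖X j‖ = ‖w j‖ := fun j => by
    rw [hX]
    rw [LinearIsometryEquiv.norm_map]
    rfl
  have hny : ∀ i, ‖∑ j, α i j • X j‖ = ‖∑ j, α i j • w j‖ := by
    intro i
    have h1 : ∑ j, α i j • X j = B.repr (∑ j, α i j • w' j) := by
      rw [map_sum]
      exact Finset.sum_congr rfl fun j _ => by rw [hX, map_smul]
    rw [h1, LinearIsometryEquiv.norm_map]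
    have hcoe : ((∑ j, α i j • w' j : W) : H) = ∑ j, α i j • w j := by
      push_cast
      rfl
    rw [show ‖(∑ j, α i j • w' j : W)‖ = ‖((∑ j, α i j • w' j : W) : H)‖ from rfl, hcoe]
  calc ∑ i, ‖∑ j, α i j • w j‖ ^ 2 = ∑ i, ‖∑ j, α i j • X j‖ ^ 2 :=
        Finset.sum_congr rfl fun i _ => by rw [hny]
  _ ≤ ‖scalarAmp α‖ ^ 2 * ∑ j, ‖X j‖ ^ 2 := euclid_case α X
  _ = ‖scalarAmp α‖ ^ 2 * ∑ j, ‖w j‖ ^ 2 := by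
        congr 1
        exact Finset.sum_congr rfl fun j _ => by rw [hnx]

lemma amp_smul_norm_le {n : ℕ} (α : Matrix (Fin n) (Fin n) ℂ) {p : H →L[ℂ] H}
    (hp : ‖p‖ ≤ 1) :
    ‖matAmp fun i j => α i j • p‖ ≤ ‖scalarAmp α‖ := by
  refine ContinuousLinearMap.opNorm_le_bound _ (ContinuousLinearMap.opNorm_nonneg _) fun x => ?_
  have h1 : ‖matAmp (fun i j => α i j • p) x‖ ^ 2 = ∑ i, ‖∑ j, α i j • p (x j)‖ ^ 2 := by
    rw [pilp_norm_sq]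
    refine Finset.sum_congr rfl fun i _ => ?_
    refine congrArg (fun v : H => ‖v‖ ^ 2) ((matAmp_apply _ x i).trans ?_)
    simp [ContinuousLinearMap.smul_apply]
  have h2 := sum_sq_le α fun j => p (x j)
  have h3 : ∑ j, ‖p (x j)‖ ^ 2 ≤ ∑ j, ‖x j‖ ^ 2 := by
    refine Finset.sum_le_sum fun j _ => ?_
    have h5 : ‖p (x j)‖ ≤ ‖x j‖ := by
      calc ‖p (x j)‖ ≤ ‖p‖ * ‖x j‖ := p.le_opNorm (x j)
      _ ≤ 1 * ‖x j‖ := mul_le_mul_of_nonneg_right hp (norm_nonneg _)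
      _ = ‖x j‖ := one_mul _
    nlinarith [norm_nonneg (x j), norm_nonneg (p (x j))]
  have h4 : ‖x‖ ^ 2 = ∑ j, ‖x j‖ ^ 2 := pilp_norm_sq x
  refine sq_le_imp (norm_nonneg _) (mul_nonneg (ContinuousLinearMap.opNorm_nonneg _) (norm_nonneg _)) ?_
  have h5 : (‖scalarAmp α‖ * ‖x‖) ^ 2 = ‖scalarAmp α‖ ^ 2 * ‖x‖ ^ 2 := by ring
  rw [h5, h1, h4]
  calc ∑ i, ‖∑ j, α i j • p (x j)‖ ^ 2 ≤ ‖scalarAmp α‖ ^ 2 * ∑ j, ‖p (x j)‖ ^ 2 := h2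
  _ ≤ ‖scalarAmp α‖ ^ 2 * ∑ j, ‖x j‖ ^ 2 :=
      mul_le_mul_of_nonneg_left h3 (sq_nonneg _)

end AuxAmp
section AuxHoms
set_option synthInstance.maxHeartbeats 1000000
set_option maxHeartbeats 1000000

/-- The element of `ℂ →L[ℂ] ℂ` underlying an element of `oneDimC`. -/
def cOf (a : oneDimC.carrier) : ℂ →L[ℂ] ℂ := (a : oneDimC.H →L[ℂ] oneDimC.H)

lemma cOf_add (a b : oneDimC.carrier) : cOf (a + b) = cOf a + cOf b := rfl
lemma cOf_smul (c : ℂ) (a : oneDimC.carrier) : cOf (c • a) = c • cOf a := rfl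
lemma cOf_zero : cOf 0 = 0 := rfl
lemma cOf_mul (a b : oneDimC.carrier) : cOf (a * b) = cOf a * cOf b := rfl

lemma cOf_apply (a : oneDimC.carrier) (z : ℂ) : cOf a z = z * cOf a 1 := by
  conv_lhs => rw [show z = z • (1 : ℂ) by simp]
  rw [map_smul, smul_eq_mul]

lemma oneDim_coe (a : oneDimC.carrier) : cOf a = (cOf a 1) • (1 : ℂ →L[ℂ] ℂ) := by
  refine ContinuousLinearMap.ext fun z => ?_
  rw [cOf_apply]
  simp [smul_eq_mul, mul_comm]

lemma matNorm_oneDimC {n : ℕ} (a : Matrix (Fin n) (Fin n) oneDimC.carrier) :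
    matNorm oneDimC a = ‖scalarAmp fun i j => cOf (a i j) 1‖ := by
  show ‖matAmp fun i j => cOf (a i j)‖ = _
  show _ = ‖matAmp fun i j => (cOf (a i j) 1) • (1 : ℂ →L[ℂ] ℂ)‖
  have h : (fun i j => cOf (a i j)) = fun i j => (cOf (a i j) 1) • (1 : ℂ →L[ℂ] ℂ) := by
    funext i j
    exact oneDim_coe (a i j)
  rw [h]

/-- The completely contractive homomorphism `ℂ → A` determined by a self-adjoint
idempotent. -/
def projCCHom (A : OpAlg) (p : A.carrier) (hidem : p * p = p)
    (hsa : IsSelfAdjoint (p : A.H →L[ℂ] A.H)) : CCHom oneDimC A where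
  toHom :=
    { toFun := fun a => (cOf a 1) • p
      map_add' := fun a b => by
        show (cOf (a + b) 1) • p = (cOf a 1) • p + (cOf b 1) • p
        rw [cOf_add, ContinuousLinearMap.add_apply, add_smul]
      map_smul' := fun c a => by
        show (cOf (c • a) 1) • p = c • ((cOf a 1) • p)
        rw [cOf_smul, ContinuousLinearMap.smul_apply, smul_smul, smul_eq_mul]
      map_zero' := by
        show (cOf (0 : oneDimC.carrier) 1) • p = 0
        rw [cOf_zero]; simp
      map_mul' := fun a b => by
        show (cOf (a * b) 1) • p = ((cOf a 1) • p) * ((cOf b 1) • p)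
        have h1 : cOf (a * b) 1 = (cOf a 1) * (cOf b 1) := by
          rw [cOf_mul, ContinuousLinearMap.mul_apply, cOf_apply]
          ring
        rw [h1, smul_mul_smul_comm, hidem]
    }
  completelyContractive := fun n a => by
    have hppc : (p : A.H →L[ℂ] A.H) * (p : A.H →L[ℂ] A.H) = (p : A.H →L[ℂ] A.H) := by
      rw [← MulMemClass.coe_mul, hidem]
    have hp1 : ‖(p : A.H →L[ℂ] A.H)‖ ≤ 1 := norm_le_one_of_sa_idem hppc hsa
    rw [matNorm_oneDimC]
    show ‖matAmp fun i j => (((cOf (a i j) 1) • p : A.carrier) : A.H →L[ℂ] A.H)‖ ≤ _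
    have hc : (fun i j => (((cOf (a i j) 1) • p : A.carrier) : A.H →L[ℂ] A.H))
        = fun i j => (cOf (a i j) 1) • (p : A.H →L[ℂ] A.H) := rfl
    rw [hc]
    exact amp_smul_norm_le _ hp1

/-- The identity completely contractive homomorphism. -/
def CCHom.idA (A : OpAlg) : CCHom A A where
  toHom := NonUnitalAlgHom.id ℂ A.carrier
  completelyContractive := fun n a => le_of_eq rfl

/-- Composition of completely contractive homomorphisms. -/
def CCHom.compc {A B C : OpAlg} (g : CCHom B C) (f : CCHom A B) : CCHom A C where
  toHom := g.toHom.comp f.toHom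
  completelyContractive := fun n a =>
    le_trans (g.completelyContractive n fun i j => f.toHom (a i j))
      (f.completelyContractive n a)

/-- A graph representation of `V₂` from two self-adjoint idempotents. -/
def mkRep2 (B : OpAlg) (p q : B.carrier) (hp : p * p = p) (hq : q * q = q)
    (hsp : IsSelfAdjoint (p : B.H →L[ℂ] B.H)) (hsq : IsSelfAdjoint (q : B.H →L[ℂ] B.H)) :
    GraphRep V2 B where
  v := ![p, q]
  e := fun x => x.elim
  idem := Fin.forall_fin_two.mpr ⟨by simpa using hp, by simpa using hq⟩
  selfAdjoint := Fin.forall_fin_two.mpr ⟨by simpa using hsp, by simpa using hsq⟩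
  contractive := fun x => x.elim
  range_mul := fun x => x.elim
  mul_source := fun x => x.elim

lemma mkRep2_v0 (B : OpAlg) (p q : B.carrier) (hp : p * p = p) (hq : q * q = q)
    (hsp : IsSelfAdjoint (p : B.H →L[ℂ] B.H)) (hsq : IsSelfAdjoint (q : B.H →L[ℂ] B.H)) :
    (mkRep2 B p q hp hq hsp hsq).v (0 : Fin 2) = p := rfl

lemma mkRep2_v1 (B : OpAlg) (p q : B.carrier) (hp : p * p = p) (hq : q * q = q)
    (hsp : IsSelfAdjoint (p : B.H →L[ℂ] B.H)) (hsq : IsSelfAdjoint (q : B.H →L[ℂ] B.H)) :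
    (mkRep2 B p q hp hq hsp hsq).v (1 : Fin 2) = q := rfl

end AuxHoms
section AuxTwoDim
set_option synthInstance.maxHeartbeats 1000000
set_option maxHeartbeats 1000000

/-- The bounded operators on `ℂ²` as an operator algebra. -/
def twoDimOp : OpAlg where
  H := EuclideanSpace ℂ (Fin 2)
  carrier := ⊤
  isClosed := by
    have h : ((⊤ : NonUnitalSubalgebra ℂ (EuclideanSpace ℂ (Fin 2) →L[ℂ] EuclideanSpace ℂ (Fin 2))) :
        Set (EuclideanSpace ℂ (Fin 2) →L[ℂ] EuclideanSpace ℂ (Fin 2))) = Set.univ := rfl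
    rw [h]; exact isClosed_univ

/-- The first projection matrix. -/
def matP : Matrix (Fin 2) (Fin 2) ℂ := !![1, 0; 0, 0]

/-- The second projection matrix. -/
def matQ : Matrix (Fin 2) (Fin 2) ℂ := !![1/2, 1/2; 1/2, 1/2]

lemma matP_idem : matP * matP = matP := by
  ext i j
  rw [Matrix.mul_apply]
  fin_cases i <;> fin_cases j <;> simp [matP, Fin.sum_univ_two]

lemma matQ_idem : matQ * matQ = matQ := by
  ext i j
  rw [Matrix.mul_apply]
  fin_cases i <;> fin_cases j <;> norm_num [matQ, Fin.sum_univ_two]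

lemma matP_sa : star matP = matP := by
  rw [matP, Matrix.star_eq_conjTranspose]
  ext i j
  fin_cases i <;> fin_cases j <;> simp [Matrix.conjTranspose_apply]

lemma matQ_sa : star matQ = matQ := by
  rw [matQ, Matrix.star_eq_conjTranspose]
  ext i j
  fin_cases i <;> fin_cases j <;>
    simp [Matrix.conjTranspose_apply, Complex.ext_iff]

lemma matPQ_ne : matP * matQ ≠ matQ * matP := by
  intro h
  have h2 := congrFun (congrFun h 0) 1
  rw [Matrix.mul_apply, Matrix.mul_apply] at h2
  rw [matP, matQ] at h2
  simp [Fin.sum_univ_two] at h2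

/-- The image of `matP` in `twoDimOp`. -/
def opP : twoDimOp.carrier :=
  ⟨Matrix.toEuclideanCLM (n := Fin 2) (𝕜 := ℂ) matP, trivial⟩

/-- The image of `matQ` in `twoDimOp`. -/
def opQ : twoDimOp.carrier :=
  ⟨Matrix.toEuclideanCLM (n := Fin 2) (𝕜 := ℂ) matQ, trivial⟩

lemma opP_idem : opP * opP = opP := by
  apply Subtype.ext
  show (Matrix.toEuclideanCLM (n := Fin 2) (𝕜 := ℂ) matP) * (Matrix.toEuclideanCLM (n := Fin 2) (𝕜 := ℂ) matP) = _
  rw [← map_mul, matP_idem]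
  rfl

lemma opQ_idem : opQ * opQ = opQ := by
  apply Subtype.ext
  show (Matrix.toEuclideanCLM (n := Fin 2) (𝕜 := ℂ) matQ) * (Matrix.toEuclideanCLM (n := Fin 2) (𝕜 := ℂ) matQ) = _
  rw [← map_mul, matQ_idem]
  rfl

lemma opP_sa : IsSelfAdjoint ((opP : twoDimOp.carrier) : twoDimOp.H →L[ℂ] twoDimOp.H) := by
  show star (Matrix.toEuclideanCLM (n := Fin 2) (𝕜 := ℂ) matP) = _
  rw [← map_star, matP_sa]
  rfl

lemma opQ_sa : IsSelfAdjoint ((opQ : twoDimOp.carrier) : twoDimOp.H →L[ℂ] twoDimOp.H) := by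
  show star (Matrix.toEuclideanCLM (n := Fin 2) (𝕜 := ℂ) matQ) = _
  rw [← map_star, matQ_sa]
  rfl

lemma opPQ_ne : opP * opQ ≠ opQ * opP := by
  intro h
  apply matPQ_ne
  have h2 : (Matrix.toEuclideanCLM (n := Fin 2) (𝕜 := ℂ)) (matP * matQ)
      = (Matrix.toEuclideanCLM (n := Fin 2) (𝕜 := ℂ)) (matQ * matP) := by
    rw [map_mul, map_mul]
    exact congrArg Subtype.val h
  exact (Matrix.toEuclideanCLM (n := Fin 2) (𝕜 := ℂ)).injective h2

end AuxTwoDim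
set_option maxHeartbeats 2000000 in
set_option synthInstance.maxHeartbeats 1000000 in
/-- `OA(V₂)` is completely isometrically isomorphic to the
unamalgamated universal free product `ℂ * ℂ`; in particular it is not isomorphic
to `ℂ ⊕ ℂ`. -/
theorem universalOA_V2_eq_free_product_C_C :
    ∀ (A : OpAlg) (ι : GraphRep V2 A), IsUniversalOA V2 A ι →
      (∀ (F : OpAlg) (iA iB : CCHom oneDimC F),
        IsFreeProduct oneDimC oneDimC F iA iB → CIIso A F) ∧
      (∀ D : OpAlg, IsCplusC D → ¬ CIIso A D) := by
  intro A ι hA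
  constructor
  · -- Part 1: CIIso A F
    intro F iA iB hF
    obtain ⟨-, -, -, hunivF⟩ := hF
    obtain ⟨-, huniv⟩ := hA
    -- the canonical idempotents in F
    set e1 : oneDimC.carrier := ⟨1, trivial⟩ with he1def
    have he1m : e1 * e1 = e1 := Subtype.ext (one_mul 1)
    have he1app : cOf e1 1 = 1 := rfl
    set tA : F.carrier := iA.toHom e1 with htAdef
    set tB : F.carrier := iB.toHom e1 with htBdef
    have htA : tA * tA = tA := by rw [htAdef, ← map_mul, he1m]
    have htB : tB * tB = tB := by rw [htBdef, ← map_mul, he1m]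
    have htAc : (tA : F.H →L[ℂ] F.H) * (tA : F.H →L[ℂ] F.H) = (tA : F.H →L[ℂ] F.H) := by
      rw [← MulMemClass.coe_mul, htA]
    have htBc : (tB : F.H →L[ℂ] F.H) * (tB : F.H →L[ℂ] F.H) = (tB : F.H →L[ℂ] F.H) := by
      rw [← MulMemClass.coe_mul, htB]
    have hone : ‖(1 : ℂ →L[ℂ] ℂ)‖ = 1 := by
      rw [ContinuousLinearMap.one_def, ContinuousLinearMap.norm_id]
    have hmatone : matNorm oneDimC (fun _ _ : Fin 1 => e1) = 1 := by
      rw [matNorm_single oneDimC e1]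
      exact hone
    have hnormA : ‖(tA : F.H →L[ℂ] F.H)‖ ≤ 1 := by
      have hcc := iA.completelyContractive 1 (fun _ _ => e1)
      calc ‖(tA : F.H →L[ℂ] F.H)‖ = matNorm F (fun _ _ : Fin 1 => tA) :=
            (matNorm_single F tA).symm
      _ ≤ matNorm oneDimC (fun _ _ : Fin 1 => e1) := hcc
      _ = 1 := hmatone
    have hnormB : ‖(tB : F.H →L[ℂ] F.H)‖ ≤ 1 := by
      have hcc := iB.completelyContractive 1 (fun _ _ => e1)
      calc ‖(tB : F.H →L[ℂ] F.H)‖ = matNorm F (fun _ _ : Fin 1 => tB) :=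
            (matNorm_single F tB).symm
      _ ≤ matNorm oneDimC (fun _ _ : Fin 1 => e1) := hcc
      _ = 1 := hmatone
    have hsaA : IsSelfAdjoint (tA : F.H →L[ℂ] F.H) :=
      isSelfAdjoint_of_idem_norm_le_one htAc hnormA
    have hsaB : IsSelfAdjoint (tB : F.H →L[ℂ] F.H) :=
      isSelfAdjoint_of_idem_norm_le_one htBc hnormB
    -- the graph representation on F
    set ρF : GraphRep V2 F := mkRep2 F tA tB htA htB hsaA hsaB with hρF
    obtain ⟨ψ, hψ, -⟩ := huniv F ρF
    -- the CCHoms out of ℂ into A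
    set φ0 : CCHom oneDimC A := projCCHom A (ι.v (0 : Fin 2)) (ι.idem _) (ι.selfAdjoint _)
      with hφ0
    set φ1 : CCHom oneDimC A := projCCHom A (ι.v (1 : Fin 2)) (ι.idem _) (ι.selfAdjoint _)
      with hφ1
    obtain ⟨χ, hχ, -⟩ := hunivF A φ0 φ1
    -- χ ∘ ψ = id on A
    obtain ⟨u, -, huu⟩ := huniv A ι
    have hid : ExtendsRep (CCHom.idA A) ι ι := ⟨fun _ => rfl, fun _ => rfl⟩
    have hc0 : (CCHom.compc χ ψ).toHom (ι.v (0 : Fin 2)) = ι.v (0 : Fin 2) := by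
      show χ.toHom (ψ.toHom (ι.v (0 : Fin 2))) = ι.v (0 : Fin 2)
      rw [hψ.1 (0 : Fin 2), hρF, mkRep2_v0, htAdef, hχ.1 e1, hφ0]
      show (cOf e1 1) • ι.v (0 : Fin 2) = ι.v (0 : Fin 2)
      rw [he1app, one_smul]
    have hc1 : (CCHom.compc χ ψ).toHom (ι.v (1 : Fin 2)) = ι.v (1 : Fin 2) := by
      show χ.toHom (ψ.toHom (ι.v (1 : Fin 2))) = ι.v (1 : Fin 2)
      rw [hψ.1 (1 : Fin 2), hρF, mkRep2_v1, htBdef, hχ.2 e1, hφ1]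
      show (cOf e1 1) • ι.v (1 : Fin 2) = ι.v (1 : Fin 2)
      rw [he1app, one_smul]
    have hcomp : ExtendsRep (CCHom.compc χ ψ) ι ι := by
      refine ⟨?_, fun x => x.elim⟩
      intro x
      refine Fin.cases ?_ (fun i => ?_) x
      · exact hc0
      · have hi : i = 0 := Subsingleton.elim i 0
        subst hi
        exact hc1
    have heqA : CCHom.compc χ ψ = CCHom.idA A :=
      (huu _ hcomp).trans (huu _ hid).symm
    have hleft : ∀ a, χ.toHom (ψ.toHom a) = a := by
      intro a
      have h := congrArg (fun c : CCHom A A => c.toHom a) heqA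
      exact h
    -- ψ ∘ χ = id on F
    obtain ⟨u2, -, huu2⟩ := hunivF F iA iB
    have hidF : (∀ a, (CCHom.idA F).toHom (iA.toHom a) = iA.toHom a) ∧
        (∀ b, (CCHom.idA F).toHom (iB.toHom b) = iB.toHom b) := ⟨fun _ => rfl, fun _ => rfl⟩
    have hsm : ∀ a : oneDimC.carrier, (cOf a 1) • e1 = a := by
      intro a
      apply Subtype.ext
      show (cOf a 1) • (1 : ℂ →L[ℂ] ℂ) = cOf a
      exact (oneDim_coe a).symm
    have hcompF : (∀ a, (CCHom.compc ψ χ).toHom (iA.toHom a) = iA.toHom a) ∧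
        (∀ b, (CCHom.compc ψ χ).toHom (iB.toHom b) = iB.toHom b) := by
      constructor
      · intro a
        show ψ.toHom (χ.toHom (iA.toHom a)) = iA.toHom a
        rw [hχ.1 a, hφ0]
        show ψ.toHom ((cOf a 1) • ι.v (0 : Fin 2)) = iA.toHom a
        rw [map_smul, hψ.1 (0 : Fin 2), hρF, mkRep2_v0, htAdef, ← map_smul, hsm]
      · intro b
        show ψ.toHom (χ.toHom (iB.toHom b)) = iB.toHom b
        rw [hχ.2 b, hφ1]
        show ψ.toHom ((cOf b 1) • ι.v (1 : Fin 2)) = iB.toHom b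
        rw [map_smul, hψ.1 (1 : Fin 2), hρF, mkRep2_v1, htBdef, ← map_smul, hsm]
    have heqF : CCHom.compc ψ χ = CCHom.idA F :=
      (huu2 _ hcompF).trans (huu2 _ hidF).symm
    have hright : ∀ b, ψ.toHom (χ.toHom b) = b := by
      intro b
      have h := congrArg (fun c : CCHom F F => c.toHom b) heqF
      exact h
    refine ⟨ψ, Function.bijective_iff_has_inverse.mpr ⟨χ.toHom, hleft, hright⟩, ?_⟩
    intro n a
    refine le_antisymm (ψ.completelyContractive n a) ?_
    have h := χ.completelyContractive n fun i j => ψ.toHom (a i j)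
    have heq : (fun i j => χ.toHom (ψ.toHom (a i j))) = a :=
      funext fun i => funext fun j => hleft (a i j)
    rwa [heq] at h
  · -- Part 2: not ℂ ⊕ ℂ
    intro D hD hiso
    obtain ⟨p, q, hp, hq, -, -, -, -, hpq, hqp, hspan⟩ := hD
    obtain ⟨φ, hbij, -⟩ := hiso
    have hcommD : ∀ x y : D.carrier, x * y = y * x := by
      intro x y
      obtain ⟨a, b, hx⟩ := hspan x
      obtain ⟨c, d, hy⟩ := hspan y
      have expand : ∀ a b c d : ℂ,
          (a • p + b • q) * (c • p + d • q) = (a * c) • p + (b * d) • q := by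
        intro a b c d
        rw [add_mul, mul_add, mul_add, smul_mul_smul_comm, smul_mul_smul_comm,
          smul_mul_smul_comm, smul_mul_smul_comm, hp, hq, hpq, hqp, smul_zero, smul_zero,
          add_zero, zero_add]
      rw [hx, hy, expand, expand, mul_comm c a, mul_comm d b]
    have hvcomm : ι.v (0 : Fin 2) * ι.v (1 : Fin 2) = ι.v (1 : Fin 2) * ι.v (0 : Fin 2) := by
      apply hbij.injective
      rw [map_mul, map_mul, hcommD]
    set σ : GraphRep V2 twoDimOp := mkRep2 twoDimOp opP opQ opP_idem opQ_idem opP_sa opQ_sa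
      with hσ
    obtain ⟨ψ2, hψ2, -⟩ := hA.2 twoDimOp σ
    have e0 : ψ2.toHom (ι.v (0 : Fin 2)) = opP := by
      rw [hψ2.1 (0 : Fin 2), hσ, mkRep2_v0]
    have e1' : ψ2.toHom (ι.v (1 : Fin 2)) = opQ := by
      rw [hψ2.1 (1 : Fin 2), hσ, mkRep2_v1]
    apply opPQ_ne
    calc opP * opQ = ψ2.toHom (ι.v (0 : Fin 2)) * ψ2.toHom (ι.v (1 : Fin 2)) := by
          rw [e0, e1']
    _ = ψ2.toHom (ι.v (0 : Fin 2) * ι.v (1 : Fin 2)) := (map_mul _ _ _).symm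
    _ = ψ2.toHom (ι.v (1 : Fin 2) * ι.v (0 : Fin 2)) := by rw [hvcomm]
    _ = ψ2.toHom (ι.v (1 : Fin 2)) * ψ2.toHom (ι.v (0 : Fin 2)) := map_mul _ _ _
    _ = opQ * opP := by rw [e0, e1']

end
end

section
/- Every finite directed graph can be constructed as a finite iterated amalgamated free product of copies of the four building-block graphs: V₁ (one vertex, no edges), V₂ (two vertices, no edges), L₁ (two vertices and a single edge from one to the other), and B₁ (one vertex with a single loop), where all amalgamations are over subgraphs consisting of vertices. -/
noncomputable section

open scoped Classical

/-- A homomorphism of directed graphs. -/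
structure GraphHom (Q R : DiGraph) where
  vMap : Q.V → R.V
  eMap : Q.E → R.E
  s_eq : ∀ e, R.s (eMap e) = vMap (Q.s e)
  r_eq : ∀ e, R.r (eMap e) = vMap (Q.r e)

/-- A monomorphism of directed graphs. -/
def GraphHom.Mono {Q R : DiGraph} (k : GraphHom Q R) : Prop :=
  Function.Injective k.vMap ∧ Function.Injective k.eMap

/-- Isomorphism of directed graphs. -/
def GraphIso (Q R : DiGraph) : Prop :=
  ∃ k : GraphHom Q R, Function.Bijective k.vMap ∧ Function.Bijective k.eMap

/-- The free product of two directed graphs amalgamated over a common subgraph `R`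
(embedded via `k₁` and `k₂`). -/
def GraphFreeProd (Q₁ Q₂ R : DiGraph) (k₁ : GraphHom R Q₁) (k₂ : GraphHom R Q₂) :
    DiGraph where
  V := {v : Q₁.V // v ∉ Set.range k₁.vMap} ⊕ {v : Q₂.V // v ∉ Set.range k₂.vMap} ⊕ R.V
  E := {e : Q₁.E // e ∉ Set.range k₁.eMap} ⊕ {e : Q₂.E // e ∉ Set.range k₂.eMap} ⊕ R.E
  s := fun e => match e with
    | .inl e =>
        if h : Q₁.s e.1 ∈ Set.range k₁.vMap then .inr (.inr h.choose)
        else .inl ⟨Q₁.s e.1, h⟩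
    | .inr (.inl e) =>
        if h : Q₂.s e.1 ∈ Set.range k₂.vMap then .inr (.inr h.choose)
        else .inr (.inl ⟨Q₂.s e.1, h⟩)
    | .inr (.inr e) => .inr (.inr (R.s e))
  r := fun e => match e with
    | .inl e =>
        if h : Q₁.r e.1 ∈ Set.range k₁.vMap then .inr (.inr h.choose)
        else .inl ⟨Q₁.r e.1, h⟩
    | .inr (.inl e) =>
        if h : Q₂.r e.1 ∈ Set.range k₂.vMap then .inr (.inr h.choose)
        else .inr (.inl ⟨Q₂.r e.1, h⟩)
    | .inr (.inr e) => .inr (.inr (R.r e))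

/-- The building-block graph `V₁`: one vertex, no edges. -/
def V1 : DiGraph := ⟨PUnit, Empty, Empty.elim, Empty.elim⟩

/-- The building-block graph `L₁`: two vertices and a single edge from one to the other. -/
def L1 : DiGraph := ⟨Fin 2, PUnit, fun _ => 0, fun _ => 1⟩

/-- The building-block graph `B₁`: one vertex with a single loop. -/
def B1 : DiGraph := ⟨PUnit, PUnit, fun _ => ⟨⟩, fun _ => ⟨⟩⟩

/-- The directed graphs constructible, up to isomorphism, as finite iterated free
products of copies of `V₁`, `V₂`, `L₁`, `B₁`, amalgamated over subgraphs consisting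
only of vertices (i.e. with no edges). -/
inductive Constructible : DiGraph → Prop
  | basic {Q : DiGraph} :
      (GraphIso Q V1 ∨ GraphIso Q V2 ∨ GraphIso Q L1 ∨ GraphIso Q B1) → Constructible Q
  | freeProd {Q Q₁ Q₂ R : DiGraph} {k₁ : GraphHom R Q₁} {k₂ : GraphHom R Q₂} :
      Constructible Q₁ → Constructible Q₂ → k₁.Mono → k₂.Mono → IsEmpty R.E →
      GraphIso Q (GraphFreeProd Q₁ Q₂ R k₁ k₂) → Constructible Q


section Helpers

lemma iso_refl (Q : DiGraph) : GraphIso Q Q :=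
  ⟨⟨id, id, fun _ => rfl, fun _ => rfl⟩, Function.bijective_id, Function.bijective_id⟩

lemma iso_trans {Q R S : DiGraph} (h1 : GraphIso Q R) (h2 : GraphIso R S) : GraphIso Q S := by
  obtain ⟨k, hkv, hke⟩ := h1
  obtain ⟨l, hlv, hle⟩ := h2
  exact ⟨⟨l.vMap ∘ k.vMap, l.eMap ∘ k.eMap,
    fun e => by simp [Function.comp, l.s_eq, k.s_eq],
    fun e => by simp [Function.comp, l.r_eq, k.r_eq]⟩,
    hlv.comp hkv, hle.comp hke⟩

lemma constructible_of_iso {Q Q' : DiGraph} (h : Constructible Q') (hiso : GraphIso Q Q') :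
    Constructible Q := by
  cases h with
  | basic h' =>
      exact .basic (h'.imp (iso_trans hiso)
        (Or.imp (iso_trans hiso) (Or.imp (iso_trans hiso) (iso_trans hiso))))
  | freeProd c1 c2 m1 m2 hE i => exact .freeProd c1 c2 m1 m2 hE (iso_trans hiso i)

lemma edgeless_constructible :
    ∀ n (Q : DiGraph), Finite Q.V → Nonempty Q.V → IsEmpty Q.E → Nat.card Q.V = n →
      Constructible Q := by
  intro n
  induction n with
  | zero =>
      intro Q hV hne hE hc
      haveI := hV; haveI := hne
      have := Nat.card_pos (α := Q.V)
      omega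
  | succ n ih =>
      intro Q hV hne hE hc
      haveI := hV; haveI := hne
      by_cases hn : n = 0
      · subst hn
        haveI : Subsingleton Q.V := by
          rw [Nat.card_eq_one_iff_unique] at hc
          exact hc.1
        refine .basic (Or.inl ⟨⟨fun _ => ⟨⟩, fun e => hE.elim e,
          fun e => hE.elim e, fun e => hE.elim e⟩, ?_, ?_⟩)
        · exact ⟨fun a b _ => Subsingleton.elim a b,
            fun u => ⟨hne.some, Subsingleton.elim (α := PUnit) _ _⟩⟩
        · exact ⟨fun a b _ => hE.elim a, fun u => u.elim⟩
      · obtain ⟨v⟩ := hne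
        set Q1 : DiGraph := ⟨{w : Q.V // w ≠ v}, Empty, Empty.elim, Empty.elim⟩ with hQ1
        set R : DiGraph := ⟨Empty, Empty, Empty.elim, Empty.elim⟩ with hR
        set k₁ : GraphHom R Q1 := ⟨Empty.elim, Empty.elim, fun x => x.elim, fun x => x.elim⟩
          with hk₁
        set k₂ : GraphHom R V1 := ⟨Empty.elim, Empty.elim, fun x => x.elim, fun x => x.elim⟩
          with hk₂
        haveI := Fintype.ofFinite Q.V
        have hcard : Nat.card Q1.V = n := by
          have h1 : Fintype.card {w : Q.V // ¬ (w = v)} = Fintype.card Q.V - 1 := by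
            rw [Fintype.card_subtype_compl, Fintype.card_subtype_eq]
          have h2 : Nat.card Q.V = Fintype.card Q.V := Nat.card_eq_fintype_card
          have h3 : Nat.card Q1.V = Fintype.card {w : Q.V // ¬ (w = v)} :=
            Nat.card_eq_fintype_card
          omega
        have hne1 : Nonempty Q1.V := by
          have hp : 0 < Nat.card Q1.V := by omega
          exact (Nat.card_pos_iff.mp hp).1
        have c1 : Constructible Q1 :=
          ih Q1 (inferInstanceAs (Finite {w : Q.V // w ≠ v})) hne1
            ⟨fun x => Empty.elim x⟩ hcard
        have cV1 : Constructible V1 := .basic (Or.inl (iso_refl V1))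
        refine .freeProd (R := R) (k₁ := k₁) (k₂ := k₂) c1 cV1
          ⟨fun a => Empty.elim a, fun a => Empty.elim a⟩
          ⟨fun a => Empty.elim a, fun a => Empty.elim a⟩ ⟨fun x => Empty.elim x⟩ ?_
        refine ⟨⟨fun w => if h : w = v then
            Sum.inr (Sum.inl ⟨⟨⟩, by rintro ⟨x, -⟩; exact x.elim⟩)
          else Sum.inl ⟨⟨w, h⟩, by rintro ⟨x, -⟩; exact x.elim⟩,
          fun e => hE.elim e, fun e => hE.elim e, fun e => hE.elim e⟩, ⟨?_, ?_⟩, ⟨?_, ?_⟩⟩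
        · intro a b hab
          dsimp only at hab
          by_cases ha : a = v <;> by_cases hb : b = v
          · exact ha.trans hb.symm
          · erw [dif_pos ha, dif_neg hb] at hab; exact absurd hab (by simp)
          · erw [dif_neg ha, dif_pos hb] at hab; exact absurd hab (by simp)
          · erw [dif_neg ha, dif_neg hb] at hab
            exact congrArg (Subtype.val ∘ Subtype.val) (Sum.inl.inj hab)
        · rintro (⟨⟨w, hw⟩, -⟩ | ⟨u, hu⟩ | x)
          · exact ⟨w, by dsimp only; erw [dif_neg hw]⟩
          · refine ⟨v, ?_⟩
            dsimp only
            erw [dif_pos rfl]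
            exact congrArg (fun t => Sum.inr (Sum.inl t)) (Subtype.ext (Subsingleton.elim (α := PUnit) _ _))
          · exact x.elim
        · exact fun a b _ => hE.elim a
        · rintro (⟨x, -⟩ | ⟨x, -⟩ | x) <;> exact Empty.elim x

lemma choose_eq_of_inj {α β : Type} {f : α → β} (hf : Function.Injective f) {w : β}
    (h : w ∈ Set.range f) {x : α} (hx : f x = w) : h.choose = x :=
  hf (h.choose_spec.trans hx.symm)

lemma loop_step (Q : DiGraph) (e : Q.E) (he : Q.s e = Q.r e)
    (hc : Constructible ⟨Q.V, {f : Q.E // f ≠ e}, fun f => Q.s f.1, fun f => Q.r f.1⟩) :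
    Constructible Q := by
  set Q1 : DiGraph := ⟨Q.V, {f : Q.E // f ≠ e}, fun f => Q.s f.1, fun f => Q.r f.1⟩ with hQ1
  set k₁ : GraphHom V1 Q1 := ⟨fun _ => Q.s e, fun x => Empty.elim x,
    fun x => Empty.elim x, fun x => Empty.elim x⟩ with hk₁
  set k₂ : GraphHom V1 B1 := ⟨fun _ => ⟨⟩, fun x => Empty.elim x,
    fun x => Empty.elim x, fun x => Empty.elim x⟩ with hk₂
  have hk₁v : Function.Injective k₁.vMap := fun a b _ => Subsingleton.elim (α := PUnit) a b
  have hk₂v : Function.Injective k₂.vMap := fun a b _ => Subsingleton.elim (α := PUnit) a b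
  have cB1 : Constructible B1 := .basic (Or.inr (Or.inr (Or.inr (iso_refl B1))))
  refine .freeProd (R := V1) (k₁ := k₁) (k₂ := k₂) hc cB1
    ⟨hk₁v, fun a => Empty.elim a⟩ ⟨hk₂v, fun a => Empty.elim a⟩
    (inferInstanceAs (IsEmpty Empty)) ?_
  refine ⟨⟨fun w => if h : w = Q.s e then Sum.inr (Sum.inr ⟨⟩)
      else Sum.inl ⟨w, by rintro ⟨u, hu⟩; exact h hu.symm⟩,
    fun f => if h : f = e then Sum.inr (Sum.inl ⟨⟨⟩, by rintro ⟨x, -⟩; exact Empty.elim x⟩)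
      else Sum.inl ⟨⟨f, h⟩, by rintro ⟨x, -⟩; exact Empty.elim x⟩,
    ?_, ?_⟩, ⟨?_, ?_⟩, ⟨?_, ?_⟩⟩
  · intro f
    by_cases hf : f = e
    · subst hf
      erw [dif_pos (Eq.refl f), dif_pos (Eq.refl (Q.s f))]
      dsimp only [GraphFreeProd]
      have hmem : B1.s ⟨⟩ ∈ Set.range k₂.vMap := ⟨⟨⟩, rfl⟩
      erw [dif_pos hmem]
      exact congrArg (fun t => Sum.inr (Sum.inr t)) (Subsingleton.elim (α := PUnit) _ _)
    · erw [dif_neg hf]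
      dsimp only [GraphFreeProd]
      by_cases hm : Q.s f = Q.s e
      · have hmem : Q1.s ⟨f, hf⟩ ∈ Set.range k₁.vMap := ⟨⟨⟩, hm.symm⟩
        erw [dif_pos hmem, dif_pos hm]
        exact congrArg (fun t => Sum.inr (Sum.inr t)) (Subsingleton.elim (α := PUnit) _ _)
      · have hmem : Q1.s ⟨f, hf⟩ ∉ Set.range k₁.vMap := by rintro ⟨u, hu⟩; exact hm hu.symm
        erw [dif_neg hmem, dif_neg hm]
  · intro f
    by_cases hf : f = e
    · subst hf
      erw [dif_pos (Eq.refl f), dif_pos (he.symm : Q.r f = Q.s f)]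
      dsimp only [GraphFreeProd]
      have hmem : B1.r ⟨⟩ ∈ Set.range k₂.vMap := ⟨⟨⟩, rfl⟩
      erw [dif_pos hmem]
      exact congrArg (fun t => Sum.inr (Sum.inr t)) (Subsingleton.elim (α := PUnit) _ _)
    · erw [dif_neg hf]
      dsimp only [GraphFreeProd]
      by_cases hm : Q.r f = Q.s e
      · have hmem : Q1.r ⟨f, hf⟩ ∈ Set.range k₁.vMap := ⟨⟨⟩, hm.symm⟩
        erw [dif_pos hmem, dif_pos hm]
        exact congrArg (fun t => Sum.inr (Sum.inr t)) (Subsingleton.elim (α := PUnit) _ _)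
      · have hmem : Q1.r ⟨f, hf⟩ ∉ Set.range k₁.vMap := by rintro ⟨u, hu⟩; exact hm hu.symm
        erw [dif_neg hmem, dif_neg hm]
  · intro a b hab
    dsimp only at hab
    by_cases ha : a = Q.s e <;> by_cases hb : b = Q.s e
    · exact ha.trans hb.symm
    · erw [dif_pos ha, dif_neg hb] at hab; exact absurd hab (by simp)
    · erw [dif_neg ha, dif_pos hb] at hab; exact absurd hab (by simp)
    · erw [dif_neg ha, dif_neg hb] at hab
      exact congrArg Subtype.val (Sum.inl.inj hab)
  · rintro (⟨w, hw⟩ | ⟨u, hu⟩ | u)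
    · have hw' : w ≠ Q.s e := fun h => hw ⟨⟨⟩, h.symm⟩
      exact ⟨w, by dsimp only; erw [dif_neg hw']⟩
    · exact absurd ⟨u, Subsingleton.elim (α := PUnit) _ _⟩ hu
    · refine ⟨Q.s e, ?_⟩
      dsimp only
      erw [dif_pos (Eq.refl (Q.s e))]
      exact congrArg (fun t => Sum.inr (Sum.inr t)) (Subsingleton.elim (α := PUnit) _ _)
  · intro a b hab
    dsimp only at hab
    by_cases ha : a = e <;> by_cases hb : b = e
    · exact ha.trans hb.symm
    · erw [dif_pos ha, dif_neg hb] at hab; exact absurd hab (by simp)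
    · erw [dif_neg ha, dif_pos hb] at hab; exact absurd hab (by simp)
    · erw [dif_neg ha, dif_neg hb] at hab
      exact congrArg (Subtype.val ∘ Subtype.val) (Sum.inl.inj hab)
  · rintro (⟨⟨f, hf⟩, -⟩ | ⟨u, hu⟩ | x)
    · exact ⟨f, by dsimp only; erw [dif_neg hf]⟩
    · refine ⟨e, ?_⟩
      dsimp only
      erw [dif_pos (Eq.refl e)]
      exact congrArg (fun t => Sum.inr (Sum.inl t))
        (Subtype.ext (Subsingleton.elim (α := PUnit) _ _))
    · exact Empty.elim x


lemma nonloop_step (Q : DiGraph) (e : Q.E) (hne : Q.s e ≠ Q.r e)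
    (hc : Constructible ⟨Q.V, {f : Q.E // f ≠ e}, fun f => Q.s f.1, fun f => Q.r f.1⟩) :
    Constructible Q := by
  set Q1 : DiGraph := ⟨Q.V, {f : Q.E // f ≠ e}, fun f => Q.s f.1, fun f => Q.r f.1⟩ with hQ1
  set k₁ : GraphHom V2 Q1 := ⟨fun i => if i = (0 : Fin 2) then Q.s e else Q.r e,
    fun x => Empty.elim x, fun x => Empty.elim x, fun x => Empty.elim x⟩ with hk₁
  set k₂ : GraphHom V2 L1 := ⟨fun i => i, fun x => Empty.elim x,
    fun x => Empty.elim x, fun x => Empty.elim x⟩ with hk₂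
  have hcases : ∀ i : V2.V, i = (0 : Fin 2) ∨ i = (1 : Fin 2) := by
    intro i
    match i with
    | ⟨0, _⟩ => exact Or.inl rfl
    | ⟨1, _⟩ => exact Or.inr rfl
  have h10 : ¬((1 : Fin 2) = (0 : Fin 2)) := by decide
  have hv0 : k₁.vMap (0 : Fin 2) = Q.s e := if_pos rfl
  have hv1 : k₁.vMap (1 : Fin 2) = Q.r e := if_neg h10
  have hrs : Q.r e ≠ Q.s e := fun h => hne h.symm
  have hk₁v : Function.Injective k₁.vMap := by
    intro a b hab
    rcases hcases a with ha | ha <;> rcases hcases b with hb | hb <;> subst ha <;> subst hb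
    · rfl
    · exact absurd ((hv0.symm.trans hab).trans hv1) hne
    · exact absurd ((hv1.symm.trans hab).trans hv0) hrs
    · rfl
  have hk₂v : Function.Injective k₂.vMap := fun a b h => h
  have cL1 : Constructible L1 := .basic (Or.inr (Or.inr (Or.inl (iso_refl L1))))
  refine .freeProd (R := V2) (k₁ := k₁) (k₂ := k₂) hc cL1
    ⟨hk₁v, fun a => Empty.elim a⟩ ⟨hk₂v, fun a => Empty.elim a⟩
    (inferInstanceAs (IsEmpty Empty)) ?_
  refine ⟨⟨fun w =>
      if hs : w = Q.s e then Sum.inr (Sum.inr (0 : Fin 2))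
      else if hr : w = Q.r e then Sum.inr (Sum.inr (1 : Fin 2))
      else Sum.inl ⟨w, by
        rintro ⟨i, hi⟩
        rcases hcases i with h | h <;> subst h
        · exact hs (hi.symm.trans hv0)
        · exact hr (hi.symm.trans hv1)⟩,
    fun f => if h : f = e then
        Sum.inr (Sum.inl ⟨⟨⟩, by rintro ⟨x, -⟩; exact Empty.elim x⟩)
      else Sum.inl ⟨⟨f, h⟩, by rintro ⟨x, -⟩; exact Empty.elim x⟩,
    ?_, ?_⟩, ⟨?_, ?_⟩, ⟨?_, ?_⟩⟩
  · intro f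
    by_cases hf : f = e
    · subst hf
      erw [dif_pos (Eq.refl f), dif_pos (Eq.refl (Q.s f))]
      dsimp only [GraphFreeProd]
      have hmem : L1.s ⟨⟩ ∈ Set.range k₂.vMap := ⟨(0 : Fin 2), rfl⟩
      erw [dif_pos hmem]
      exact congrArg (fun t => Sum.inr (Sum.inr t)) (choose_eq_of_inj hk₂v hmem rfl)
    · erw [dif_neg hf]
      dsimp only [GraphFreeProd]
      by_cases hm1 : Q.s f = Q.s e
      · have h0 : k₁.vMap (0 : Fin 2) = Q.s f := hv0.trans hm1.symm
        have hmem : Q1.s ⟨f, hf⟩ ∈ Set.range k₁.vMap := ⟨(0 : Fin 2), h0⟩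
        erw [dif_pos hmem, dif_pos hm1]
        exact congrArg (fun t => Sum.inr (Sum.inr t)) (choose_eq_of_inj hk₁v hmem h0)
      · by_cases hm2 : Q.s f = Q.r e
        · have h1 : k₁.vMap (1 : Fin 2) = Q.s f := hv1.trans hm2.symm
          have hmem : Q1.s ⟨f, hf⟩ ∈ Set.range k₁.vMap := ⟨(1 : Fin 2), h1⟩
          erw [dif_pos hmem, dif_neg hm1, dif_pos hm2]
          exact congrArg (fun t => Sum.inr (Sum.inr t)) (choose_eq_of_inj hk₁v hmem h1)
        · have hmem : Q1.s ⟨f, hf⟩ ∉ Set.range k₁.vMap := by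
            rintro ⟨i, hi⟩
            rcases hcases i with h | h <;> subst h
            · exact hm1 (hi.symm.trans hv0)
            · exact hm2 (hi.symm.trans hv1)
          erw [dif_neg hmem, dif_neg hm1, dif_neg hm2]
  · intro f
    by_cases hf : f = e
    · subst hf
      erw [dif_pos (Eq.refl f), dif_neg hrs, dif_pos (Eq.refl (Q.r f))]
      dsimp only [GraphFreeProd]
      have hmem : L1.r ⟨⟩ ∈ Set.range k₂.vMap := ⟨(1 : Fin 2), rfl⟩
      erw [dif_pos hmem]
      exact congrArg (fun t => Sum.inr (Sum.inr t)) (choose_eq_of_inj hk₂v hmem rfl)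
    · erw [dif_neg hf]
      dsimp only [GraphFreeProd]
      by_cases hm1 : Q.r f = Q.s e
      · have h0 : k₁.vMap (0 : Fin 2) = Q.r f := hv0.trans hm1.symm
        have hmem : Q1.r ⟨f, hf⟩ ∈ Set.range k₁.vMap := ⟨(0 : Fin 2), h0⟩
        erw [dif_pos hmem, dif_pos hm1]
        exact congrArg (fun t => Sum.inr (Sum.inr t)) (choose_eq_of_inj hk₁v hmem h0)
      · by_cases hm2 : Q.r f = Q.r e
        · have h1 : k₁.vMap (1 : Fin 2) = Q.r f := hv1.trans hm2.symm
          have hmem : Q1.r ⟨f, hf⟩ ∈ Set.range k₁.vMap := ⟨(1 : Fin 2), h1⟩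
          erw [dif_pos hmem, dif_neg hm1, dif_pos hm2]
          exact congrArg (fun t => Sum.inr (Sum.inr t)) (choose_eq_of_inj hk₁v hmem h1)
        · have hmem : Q1.r ⟨f, hf⟩ ∉ Set.range k₁.vMap := by
            rintro ⟨i, hi⟩
            rcases hcases i with h | h <;> subst h
            · exact hm1 (hi.symm.trans hv0)
            · exact hm2 (hi.symm.trans hv1)
          erw [dif_neg hmem, dif_neg hm1, dif_neg hm2]
  · intro a b hab
    dsimp only at hab
    by_cases ha1 : a = Q.s e
    · by_cases hb1 : b = Q.s e
      · exact ha1.trans hb1.symm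
      · erw [dif_pos ha1, dif_neg hb1] at hab
        by_cases hb2 : b = Q.r e
        · erw [dif_pos hb2] at hab
          exact absurd (Sum.inr.inj (Sum.inr.inj hab)) (fun h => h10 h.symm)
        · erw [dif_neg hb2] at hab; exact absurd hab (by simp)
    · by_cases ha2 : a = Q.r e
      · erw [dif_neg ha1, dif_pos ha2] at hab
        by_cases hb1 : b = Q.s e
        · erw [dif_pos hb1] at hab
          exact absurd (Sum.inr.inj (Sum.inr.inj hab)) h10
        · by_cases hb2 : b = Q.r e
          · exact ha2.trans hb2.symm
          · erw [dif_neg hb1, dif_neg hb2] at hab; exact absurd hab (by simp)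
      · erw [dif_neg ha1, dif_neg ha2] at hab
        by_cases hb1 : b = Q.s e
        · erw [dif_pos hb1] at hab; exact absurd hab (by simp)
        · by_cases hb2 : b = Q.r e
          · erw [dif_neg hb1, dif_pos hb2] at hab; exact absurd hab (by simp)
          · erw [dif_neg hb1, dif_neg hb2] at hab
            exact congrArg Subtype.val (Sum.inl.inj hab)
  · rintro (⟨w, hw⟩ | ⟨u, hu⟩ | i)
    · have h1 : w ≠ Q.s e := fun h => hw ⟨(0 : Fin 2), hv0.trans h.symm⟩
      have h2 : w ≠ Q.r e := fun h => hw ⟨(1 : Fin 2), hv1.trans h.symm⟩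
      exact ⟨w, by dsimp only; erw [dif_neg h1, dif_neg h2]⟩
    · exact absurd ⟨u, rfl⟩ hu
    · rcases hcases i with h | h <;> subst h
      · exact ⟨Q.s e, by dsimp only; erw [dif_pos rfl]⟩
      · exact ⟨Q.r e, by dsimp only; erw [dif_neg hrs, dif_pos rfl]⟩
  · intro a b hab
    dsimp only at hab
    by_cases ha : a = e <;> by_cases hb : b = e
    · exact ha.trans hb.symm
    · erw [dif_pos ha, dif_neg hb] at hab; exact absurd hab (by simp)
    · erw [dif_neg ha, dif_pos hb] at hab; exact absurd hab (by simp)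
    · erw [dif_neg ha, dif_neg hb] at hab
      exact congrArg (Subtype.val ∘ Subtype.val) (Sum.inl.inj hab)
  · rintro (⟨⟨f, hf⟩, -⟩ | ⟨u, hu⟩ | x)
    · exact ⟨f, by dsimp only; erw [dif_neg hf]⟩
    · refine ⟨e, ?_⟩
      dsimp only
      erw [dif_pos (Eq.refl e)]
      exact congrArg (fun t => Sum.inr (Sum.inl t))
        (Subtype.ext (Subsingleton.elim (α := PUnit) _ _))
    · exact Empty.elim x

lemma main_aux : ∀ n (Q : DiGraph), Finite Q.V → Finite Q.E → Nonempty Q.V →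
    Nat.card Q.E = n → Constructible Q := by
  intro n
  induction n with
  | zero =>
      intro Q hV hE hne hc
      haveI := hV; haveI := hE
      have hQE : IsEmpty Q.E := by
        rw [Nat.card_eq_zero] at hc
        rcases hc with h | h
        · exact h
        · exact absurd h (not_infinite_iff_finite.mpr hE)
      exact edgeless_constructible (Nat.card Q.V) Q hV hne hQE rfl
  | succ n ih =>
      intro Q hV hE hne hc
      haveI := hV; haveI := hE
      have hEne : Nonempty Q.E := (Nat.card_pos_iff.mp (by omega)).1
      obtain ⟨e⟩ := hEne
      set Q1 : DiGraph := ⟨Q.V, {f : Q.E // f ≠ e}, fun f => Q.s f.1, fun f => Q.r f.1⟩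
        with hQ1d
      have hcard : Nat.card Q1.E = n := by
        haveI := Fintype.ofFinite Q.E
        have h1 : Fintype.card {f : Q.E // ¬(f = e)} = Fintype.card Q.E - 1 := by
          rw [Fintype.card_subtype_compl, Fintype.card_subtype_eq]
        have h2 : Nat.card Q.E = Fintype.card Q.E := Nat.card_eq_fintype_card
        have h3 : Nat.card Q1.E = Fintype.card {f : Q.E // ¬(f = e)} :=
          Nat.card_eq_fintype_card
        omega
      have hc1 : Constructible Q1 :=
        ih Q1 hV (inferInstanceAs (Finite {f : Q.E // f ≠ e})) hne hcard
      by_cases hl : Q.s e = Q.r e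
      · exact loop_step Q e hl hc1
      · exact nonloop_step Q e hl hc1

end Helpers

/-- Every finite directed graph can be constructed as a finite
iterated amalgamated free product of copies of the building blocks `V₁`, `V₂`, `L₁`
and `B₁`, with all amalgamations over vertex-only subgraphs. -/
theorem finite_digraph_constructible (Q : DiGraph)
    (hV : Finite Q.V) (hE : Finite Q.E) (hne : Nonempty Q.V) : Constructible Q :=
  main_aux (Nat.card Q.E) Q hV hE hne rfl

end
end

section
/- For every directed graph Q, the universal C*-algebra GC*_m(Q) is *-isomorphic to C*_m(OA(Q)), the maximal C*-algebra of the universal operator algebra OA(Q). -/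
noncomputable section

open scoped Classical

/-! ## C*-algebra framework -/

/-- A concrete C*-algebra: a norm-closed star-subalgebra of the bounded operators on
a complex Hilbert space. -/
structure ConcCStar where
  H : Type
  [nacg : NormedAddCommGroup H]
  [ips : InnerProductSpace ℂ H]
  [cs : CompleteSpace H]
  carrier : NonUnitalStarSubalgebra ℂ (H →L[ℂ] H)
  isClosed : IsClosed (carrier : Set (H →L[ℂ] H))

attribute [instance] ConcCStar.nacg ConcCStar.ips ConcCStar.cs

/-- The underlying operator algebra of a concrete C*-algebra. -/
def ConcCStar.toOpAlg (C : ConcCStar) : OpAlg :=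
  ⟨C.H, C.carrier.toNonUnitalSubalgebra, C.isClosed⟩

/-- A `*`-homomorphism between concrete C*-algebras. -/
abbrev StarHom (C D : ConcCStar) := C.carrier →⋆ₙₐ[ℂ] D.carrier

/-- The doubled graph `Q *_{V(Q)} Q^←`: the free product of `Q` and its adjoint graph
amalgamated over the common vertex set. -/
def DiGraph.doubled (Q : DiGraph) : DiGraph :=
  ⟨Q.V, Q.E ⊕ Q.E, Sum.elim Q.s Q.r, Sum.elim Q.r Q.s⟩

/-- A contractive `*`-representation of `Q` in a C*-algebra: a contractive
representation of `Q *_{V(Q)} Q^←` such that the two copies of each edge are mapped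
to mutually adjoint elements. -/
structure StarRep (Q : DiGraph) (C : ConcCStar) where
  toRep : GraphRep Q.doubled C.toOpAlg
  star_eq : ∀ x : Q.E,
    star ((toRep.e (Sum.inl x)).val) = (toRep.e (Sum.inr x)).val

/-- A `*`-homomorphism extends (intertwines) two `*`-representations of the same graph. -/
def StarExtendsRep {Q : DiGraph} {C D : ConcCStar} (ψ : StarHom C D)
    (ρ : StarRep Q C) (σ : StarRep Q D) : Prop :=
  (∀ x, (ψ ⟨(ρ.toRep.v x).val, (ρ.toRep.v x).property⟩).val = (σ.toRep.v x).val) ∧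
  (∀ x, (ψ ⟨(ρ.toRep.e x).val, (ρ.toRep.e x).property⟩).val = (σ.toRep.e x).val)

/-- `(C, ι)` is *the* universal C*-algebra `GC*ₘ(Q)` of the directed graph `Q`:
`ι` generates `C` as a C*-algebra, and every contractive `*`-representation of `Q`
factors uniquely through a `*`-homomorphism. -/
def IsUniversalGCm (Q : DiGraph) (C : ConcCStar) (ι : StarRep Q C) : Prop :=
  closure ((NonUnitalStarAlgebra.adjoin ℂ
      (Set.range ι.toRep.v ∪ Set.range ι.toRep.e) :
    NonUnitalStarSubalgebra ℂ C.carrier) : Set C.carrier) = Set.univ ∧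
  ∀ (D : ConcCStar) (σ : StarRep Q D), ∃! ψ : StarHom C D, StarExtendsRep ψ ι σ

/-- Reinterpret an element of the underlying operator algebra of a concrete C*-algebra. -/
def ConcCStar.el {C : ConcCStar} (x : C.toOpAlg.carrier) : C.carrier :=
  ⟨x.val, x.property⟩

/-- `(C, ρ)` is the maximal C*-algebra `C*ₘ(A)` of the operator algebra `A`: `ρ` is a
completely isometric homomorphism onto a C*-generating copy of `A`, and every completely
contractive homomorphism of `A` into a C*-algebra factors uniquely through a
`*`-homomorphism of `C`. -/
def IsMaxCStar (A : OpAlg) (C : ConcCStar) (ρ : CCHom A C.toOpAlg) : Prop :=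
  ρ.CompletelyIsometric ∧
  closure ((NonUnitalStarAlgebra.adjoin ℂ
      (Set.range fun a => ConcCStar.el (ρ.toHom a)) :
    NonUnitalStarSubalgebra ℂ C.carrier) : Set C.carrier) = Set.univ ∧
  ∀ (D : ConcCStar) (φ : CCHom A D.toOpAlg),
    ∃! ψ : StarHom C D, ∀ a, (ψ (ConcCStar.el (ρ.toHom a))).val = (φ.toHom a).val

set_option synthInstance.maxHeartbeats 1000000
set_option maxHeartbeats 1000000

section Aux

open scoped InnerProductSpace ComplexConjugate

lemma piLpFinOne_norm {H : Type} [NormedAddCommGroup H]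
    (v : PiLp 2 fun _ : Fin 1 => H) : ‖v‖ = ‖v 0‖ := by
  rw [PiLp.norm_eq_of_L2]
  simp [Real.sqrt_sq (norm_nonneg _)]

lemma matAmp_apply_one {H : Type} [NormedAddCommGroup H] [InnerProductSpace ℂ H]
    (b : Matrix (Fin 1) (Fin 1) (H →L[ℂ] H)) (f : PiLp 2 fun _ : Fin 1 => H) :
    matAmp b f 0 = b 0 0 (f 0) := by
  simp [matAmp, ContinuousLinearMap.sum_apply]

lemma matNorm_one (A : OpAlg) (a : Matrix (Fin 1) (Fin 1) A.carrier) :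
    matNorm A a = ‖((a 0 0 : A.carrier) : A.H →L[ℂ] A.H)‖ := by
  unfold matNorm
  refine le_antisymm ?_ ?_
  · refine ContinuousLinearMap.opNorm_le_bound _ (norm_nonneg _) fun f => ?_
    rw [piLpFinOne_norm]
    erw [matAmp_apply_one]
    rw [piLpFinOne_norm f]
    exact ((a 0 0 : A.carrier) : A.H →L[ℂ] A.H).le_opNorm (f 0)
  · refine ContinuousLinearMap.opNorm_le_bound _ (ContinuousLinearMap.opNorm_nonneg _) fun x => ?_
    set v : PiLp 2 (fun _ : Fin 1 => A.H) := WithLp.toLp 2 (fun _ => x) with hv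
    have h1 : ‖matAmp (fun i j => ((a i j : A.carrier) : A.H →L[ℂ] A.H)) v‖
        ≤ ‖matAmp (fun i j => ((a i j : A.carrier) : A.H →L[ℂ] A.H))‖ * ‖v‖ :=
      ContinuousLinearMap.le_opNorm _ _
    rw [piLpFinOne_norm] at h1
    erw [matAmp_apply_one] at h1
    rw [piLpFinOne_norm v] at h1
    exact h1

end Aux
section SA

open scoped InnerProductSpace ComplexConjugate

lemma orth_of_proj {H : Type} [NormedAddCommGroup H] [InnerProductSpace ℂ H]
    (P : H →L[ℂ] H) (hn : ‖P‖ ≤ 1) {u w : H} (hu : P u = u) (hw : P w = 0) :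
    ⟪u, w⟫_ℂ = 0 := by
  by_cases hw0 : w = 0
  · simp [hw0]
  have hkey : ∀ c : ℂ, ‖u‖ ^ 2 ≤ ‖u + c • w‖ ^ 2 := by
    intro c
    have h1 : P (u + c • w) = u := by simp [map_add, map_smul, hu, hw]
    have h2 : ‖u‖ ≤ ‖u + c • w‖ := by
      calc ‖u‖ = ‖P (u + c • w)‖ := by rw [h1]
        _ ≤ ‖P‖ * ‖u + c • w‖ := P.le_opNorm _
        _ ≤ 1 * ‖u + c • w‖ := mul_le_mul_of_nonneg_right hn (norm_nonneg _)
        _ = ‖u + c • w‖ := one_mul _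
    exact pow_le_pow_left₀ (norm_nonneg _) h2 2
  set z : ℂ := ⟪u, w⟫_ℂ with hz
  by_contra hz0
  set t : ℝ := (‖w‖ ^ 2)⁻¹ with ht
  have hwpos : (0:ℝ) < ‖w‖ ^ 2 := pow_pos (norm_pos_iff.mpr hw0) 2
  have htpos : (0:ℝ) < t := inv_pos.mpr hwpos
  have hzpos : (0:ℝ) < ‖z‖ ^ 2 := pow_pos (norm_pos_iff.mpr hz0) 2
  set c : ℂ := -(t:ℂ) * (starRingEnd ℂ) z with hc
  have hnz : Complex.normSq z = ‖z‖ ^ 2 := by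
    rw [Complex.normSq_eq_norm_sq]
  have h3 : c * z = -(t:ℂ) * ((Complex.normSq z : ℝ) : ℂ) := by
    calc c * z = -(t:ℂ) * (z * (starRingEnd ℂ) z) := by rw [hc]; ring
      _ = -(t:ℂ) * ((Complex.normSq z : ℝ) : ℂ) := by rw [Complex.mul_conj]
  have hre : (c * z).re = -(t * ‖z‖ ^ 2) := by
    rw [h3, hnz]
    have : -(t:ℂ) * ((‖z‖ ^ 2 : ℝ) : ℂ) = (((-(t * ‖z‖ ^ 2)) : ℝ) : ℂ) := by
      push_cast; ring
    rw [this, Complex.ofReal_re]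
  have hnc : ‖c‖ = t * ‖z‖ := by
    rw [hc, norm_mul, norm_neg, RCLike.norm_conj]
    simp [abs_of_pos htpos]
  have hexp := hkey c
  rw [norm_add_sq (𝕜 := ℂ)] at hexp
  rw [inner_smul_right] at hexp
  have hre2 : RCLike.re (c * ⟪u, w⟫_ℂ) = -(t * ‖z‖ ^ 2) := by
    rw [← hz]; exact hre
  rw [hre2] at hexp
  rw [norm_smul, hnc] at hexp
  have htw : t * ‖w‖ ^ 2 = 1 := by
    rw [ht]; field_simp
  have hsq : (t * ‖z‖ * ‖w‖) ^ 2 = t * ‖z‖ ^ 2 := by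
    have h4 : (t * ‖z‖ * ‖w‖) ^ 2 = (t * ‖w‖ ^ 2) * (t * ‖z‖ ^ 2) := by ring
    rw [h4, htw, one_mul]
  rw [hsq] at hexp
  have := mul_pos htpos hzpos
  linarith

lemma isSelfAdjoint_of_idem_norm_le {H : Type} [NormedAddCommGroup H]
    [InnerProductSpace ℂ H] [CompleteSpace H]
    (P : H →L[ℂ] H) (hidem : P * P = P) (hn : ‖P‖ ≤ 1) : IsSelfAdjoint P := by
  rw [ContinuousLinearMap.isSelfAdjoint_iff_isSymmetric]
  intro x y
  have happ : ∀ v, P (P v) = P v := fun v => by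
    have := congrArg (fun T : H →L[ℂ] H => T v) hidem
    simpa [ContinuousLinearMap.mul_apply] using this
  have h1 : ⟪(P x : H), y - P y⟫_ℂ = 0 :=
    orth_of_proj P hn (happ x) (by simp [map_sub, happ])
  have h2 : ⟪(P y : H), x - P x⟫_ℂ = 0 :=
    orth_of_proj P hn (happ y) (by simp [map_sub, happ])
  have h2' : ⟪x - P x, (P y : H)⟫_ℂ = 0 := by
    rw [← inner_conj_symm, h2, map_zero]
  simp only [ContinuousLinearMap.coe_coe]
  rw [inner_sub_right] at h1
  rw [inner_sub_left] at h2'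
  have e1 : ⟪(P x : H), y⟫_ℂ = ⟪(P x : H), (P y : H)⟫_ℂ := by
    have := sub_eq_zero.mp h1; exact this
  have e2 : ⟪x, (P y : H)⟫_ℂ = ⟪(P x : H), (P y : H)⟫_ℂ := by
    have := sub_eq_zero.mp h2'; exact this
  rw [e1, e2]

lemma norm_le_one_of_proj {H : Type} [NormedAddCommGroup H] [InnerProductSpace ℂ H]
    [CompleteSpace H] (P : H →L[ℂ] H) (hidem : P * P = P) (hsa : IsSelfAdjoint P) :
    ‖P‖ ≤ 1 := by
  have h : ‖P‖ * ‖P‖ = ‖P‖ := by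
    calc ‖P‖ * ‖P‖ = ‖star P * P‖ := (CStarRing.norm_star_mul_self).symm
      _ = ‖P * P‖ := by rw [hsa.star_eq]
      _ = ‖P‖ := by rw [hidem]
  nlinarith [norm_nonneg P]

end SA
lemma ConcCStar.star_mem' (C : ConcCStar) {x : C.H →L[ℂ] C.H} (h : x ∈ C.toOpAlg.carrier) :
    star x ∈ C.toOpAlg.carrier :=
  (star_mem (show x ∈ C.carrier from h) : star x ∈ C.carrier)

section Constr

lemma CCHom.norm_le {A B : OpAlg} (φ : CCHom A B) (x : A.carrier) :
    ‖(φ.toHom x).val‖ ≤ ‖x.val‖ := by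
  have h := φ.completelyContractive 1 (fun _ _ => x)
  exact (matNorm_one B _).symm.le.trans (h.trans (matNorm_one A _).le)

lemma GraphRep.v_val_idem {Q : DiGraph} {A : OpAlg} (ι : GraphRep Q A) (x : Q.V) :
    (ι.v x).val * (ι.v x).val = (ι.v x).val := by
  have h := congrArg Subtype.val (ι.idem x)
  rw [MulMemClass.coe_mul] at h
  exact h

lemma pushSA {Q : DiGraph} {A : OpAlg} (ι : GraphRep Q A) {C : ConcCStar}
    (ρ : CCHom A C.toOpAlg) (x : Q.V) :
    IsSelfAdjoint ((ρ.toHom (ι.v x)).val : C.H →L[ℂ] C.H) := by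
  refine isSelfAdjoint_of_idem_norm_le _ ?_ ?_
  · have h := congrArg Subtype.val (congrArg ρ.toHom (ι.idem x))
    rw [map_mul, MulMemClass.coe_mul] at h
    exact h
  · exact le_trans (ρ.norm_le (ι.v x))
      (norm_le_one_of_proj _ (ι.v_val_idem x) (ι.selfAdjoint x))

/-- Push a contractive representation of `Q` forward along a completely contractive
homomorphism into a C*-algebra, obtaining a contractive `*`-representation. -/
def pushStarRep {Q : DiGraph} {A : OpAlg} (ι : GraphRep Q A) {C : ConcCStar}
    (ρ : CCHom A C.toOpAlg) : StarRep Q C where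
  toRep :=
  { v := fun x => ρ.toHom (ι.v x)
    e := fun x => Sum.rec (fun y => ρ.toHom (ι.e y))
          (fun y => ⟨star ((ρ.toHom (ι.e y)).val : C.H →L[ℂ] C.H),
            C.star_mem' (ρ.toHom (ι.e y)).property⟩) x
    idem := fun x => by rw [← map_mul]; exact congrArg ρ.toHom (ι.idem x)
    selfAdjoint := fun x => pushSA ι ρ x
    contractive := fun x => by
      cases x with
      | inl y => exact le_trans (ρ.norm_le (ι.e y)) (ι.contractive y)
      | inr y =>
        show ‖star ((ρ.toHom (ι.e y)).val : C.H →L[ℂ] C.H)‖ ≤ 1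
        rw [norm_star]
        exact le_trans (ρ.norm_le (ι.e y)) (ι.contractive y)
    range_mul := fun x => by
      cases x with
      | inl y => rw [← map_mul]; exact congrArg ρ.toHom (ι.range_mul y)
      | inr y =>
        apply Subtype.ext
        have h : ρ.toHom (ι.e y) * ρ.toHom (ι.v (Q.s y)) = ρ.toHom (ι.e y) := by
          rw [← map_mul]; exact congrArg ρ.toHom (ι.mul_source y)
        have hval := congrArg Subtype.val h
        rw [MulMemClass.coe_mul] at hval
        have hstar := congrArg star hval
        rw [star_mul, (pushSA ι ρ (Q.s y)).star_eq] at hstar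
        rw [MulMemClass.coe_mul]
        exact hstar
    mul_source := fun x => by
      cases x with
      | inl y => rw [← map_mul]; exact congrArg ρ.toHom (ι.mul_source y)
      | inr y =>
        apply Subtype.ext
        have h : ρ.toHom (ι.v (Q.r y)) * ρ.toHom (ι.e y) = ρ.toHom (ι.e y) := by
          rw [← map_mul]; exact congrArg ρ.toHom (ι.range_mul y)
        have hval := congrArg Subtype.val h
        rw [MulMemClass.coe_mul] at hval
        have hstar := congrArg star hval
        rw [star_mul, (pushSA ι ρ (Q.r y)).star_eq] at hstar
        rw [MulMemClass.coe_mul]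
        exact hstar }
  star_eq := fun x => rfl

end Constr

/-- Restrict a `*`-representation of `Q` to a representation of `Q` itself. -/
def StarRep.restrict {Q : DiGraph} {G : ConcCStar} (κ : StarRep Q G) :
    GraphRep Q G.toOpAlg where
  v := κ.toRep.v
  e x := κ.toRep.e (Sum.inl x)
  idem := κ.toRep.idem
  selfAdjoint := κ.toRep.selfAdjoint
  contractive x := κ.toRep.contractive (Sum.inl x)
  range_mul x := κ.toRep.range_mul (Sum.inl x)
  mul_source x := κ.toRep.mul_source (Sum.inl x)

/-- The inclusion of the underlying operator algebra of a concrete C*-algebra into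
the C*-algebra, as a non-unital algebra homomorphism. -/
def ConcCStar.incl (C : ConcCStar) : C.toOpAlg.carrier →ₙₐ[ℂ] C.carrier where
  toFun x := ⟨x.val, x.property⟩
  map_add' _ _ := rfl
  map_mul' _ _ := rfl
  map_zero' := rfl
  map_smul' _ _ := rfl

-- C*-instance test
example (G : ConcCStar) : True := by
  haveI : IsClosed ((G.carrier : Set (G.H →L[ℂ] G.H))) := G.isClosed
  haveI : NonUnitalCStarAlgebra G.carrier := inferInstance
  trivial

-- star hom contractivity test
example (G C : ConcCStar) (ψ : StarHom G C) (y : G.carrier) : ‖(ψ y).val‖ ≤ ‖y.val‖ := by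
  haveI : IsClosed ((G.carrier : Set (G.H →L[ℂ] G.H))) := G.isClosed
  haveI : IsClosed ((C.carrier : Set (C.H →L[ℂ] C.H))) := C.isClosed
  have h : ‖ψ y‖ ≤ ‖y‖ := NonUnitalStarAlgHom.norm_apply_le ψ y
  exact h


/-- For every directed graph `Q`, the universal C*-algebra `GC*ₘ(Q)`
is `*`-isomorphic to `C*ₘ(OA(Q))`, the maximal C*-algebra of the universal operator
algebra of `Q`. -/

theorem universal_graph_CStar_eq_maximal_CStar_of_universalOA :
    ∀ (Q : DiGraph) (G : ConcCStar) (κ : StarRep Q G), IsUniversalGCm Q G κ →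
    ∀ (A : OpAlg) (ι : GraphRep Q A), IsUniversalOA Q A ι →
    ∀ (C : ConcCStar) (ρ : CCHom A C.toOpAlg), IsMaxCStar A C ρ →
      ∃ ψ : StarHom G C, Function.Bijective ψ := by
  intro Q G κ hG A ι hA C ρ hC
  haveI : IsClosed ((G.carrier : Set (G.H →L[ℂ] G.H))) := G.isClosed
  haveI : IsClosed ((C.carrier : Set (C.H →L[ℂ] C.H))) := C.isClosed
  obtain ⟨ψ, hψ, -⟩ := hG.2 C (pushStarRep ι ρ)
  obtain ⟨χ, hχ, -⟩ := hA.2 G.toOpAlg κ.restrict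
  obtain ⟨φs, hφs, -⟩ := hC.2.2 G χ
  -- the two composites to compare on `A`
  set F : A.carrier →ₙₐ[ℂ] (C.H →L[ℂ] C.H) :=
    (NonUnitalSubalgebraClass.subtype C.carrier).comp
      (ψ.toNonUnitalAlgHom.comp ((G.incl).comp χ.toHom)) with hF
  set Gm : A.carrier →ₙₐ[ℂ] (C.H →L[ℂ] C.H) :=
    (NonUnitalSubalgebraClass.subtype C.carrier).comp ((C.incl).comp ρ.toHom) with hGm
  have hFapp : ∀ a, F a = (ψ (G.incl (χ.toHom a))).val := fun a => rfl
  have hGapp : ∀ a, Gm a = (ρ.toHom a).val := fun a => rfl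
  -- continuity
  have hFcont : Continuous F := by
    refine (LipschitzWith.of_dist_le_mul (K := 1) fun a b => ?_).continuous
    rw [dist_eq_norm, ← map_sub F, Subtype.dist_eq, dist_eq_norm, NNReal.coe_one, one_mul]
    have h1 : ‖F (a - b)‖ ≤ ‖(G.incl (χ.toHom (a - b)) : G.carrier)‖ := by
      rw [hFapp]
      exact NonUnitalStarAlgHom.norm_apply_le ψ _
    have h2 : ‖(G.incl (χ.toHom (a - b)) : G.carrier)‖ = ‖(χ.toHom (a - b)).val‖ := rfl
    have h3 : ‖(χ.toHom (a - b)).val‖ ≤ ‖(a - b).val‖ := χ.norm_le _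
    have h4 : ((a - b : A.carrier) : A.H →L[ℂ] A.H) = a.val - b.val := rfl
    calc ‖F (a - b)‖ ≤ ‖(χ.toHom (a - b)).val‖ := h2 ▸ h1
      _ ≤ ‖(a - b).val‖ := h3
      _ = ‖a.val - b.val‖ := by rw [h4]
  have hGcont : Continuous Gm := by
    refine (LipschitzWith.of_dist_le_mul (K := 1) fun a b => ?_).continuous
    rw [dist_eq_norm, ← map_sub Gm, Subtype.dist_eq, dist_eq_norm, NNReal.coe_one, one_mul]
    have h3 : ‖(ρ.toHom (a - b)).val‖ ≤ ‖(a - b).val‖ := ρ.norm_le _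
    have h4 : ((a - b : A.carrier) : A.H →L[ℂ] A.H) = a.val - b.val := rfl
    calc ‖Gm (a - b)‖ = ‖(ρ.toHom (a - b)).val‖ := by rw [hGapp]; rfl
      _ ≤ ‖(a - b).val‖ := h3
      _ = ‖a.val - b.val‖ := by rw [h4]
  -- agreement on the generators
  have hbase : ∀ a ∈ (Set.range ι.v ∪ Set.range ι.e), F a = Gm a := by
    rintro a (⟨x, rfl⟩ | ⟨x, rfl⟩)
    · rw [hFapp, hGapp]
      have h1 : χ.toHom (ι.v x) = κ.restrict.v x := hχ.1 x
      rw [h1]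
      exact hψ.1 x
    · rw [hFapp, hGapp]
      have h1 : χ.toHom (ι.e x) = κ.restrict.e x := hχ.2 x
      rw [h1]
      exact hψ.2 (Sum.inl x)
  -- agreement on the generated subalgebra
  have hadj : ∀ a ∈ ((NonUnitalAlgebra.adjoin ℂ (Set.range ι.v ∪ Set.range ι.e) :
      NonUnitalSubalgebra ℂ A.carrier) : Set A.carrier), F a = Gm a := by
    intro a ha
    induction ha using NonUnitalAlgebra.adjoin_induction with
    | mem x hx => exact hbase x hx
    | add x y _ _ hx hy => rw [map_add, map_add, hx, hy]
    | zero => rw [map_zero, map_zero]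
    | mul x y _ _ hx hy => rw [map_mul, map_mul, hx, hy]
    | smul r x _ hx => rw [map_smul, map_smul, hx]
  -- agreement everywhere, by density
  have hFG : ∀ a, F a = Gm a := by
    intro a
    have hcl := Set.EqOn.closure hadj hFcont hGcont
    exact hcl (by rw [hA.1]; trivial)
  -- Step B : ψ ∘ φs = id
  have hcomp : ∀ a, ((ψ.comp φs) (ConcCStar.el (ρ.toHom a))).val = (ρ.toHom a).val := by
    intro a
    have h1 : φs (ConcCStar.el (ρ.toHom a)) = G.incl (χ.toHom a) :=
      Subtype.ext (hφs a)
    show (ψ (φs (ConcCStar.el (ρ.toHom a)))).val = (ρ.toHom a).val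
    rw [h1]
    exact hFG a
  have hid : ∀ a, ((NonUnitalStarAlgHom.id ℂ C.carrier) (ConcCStar.el (ρ.toHom a))).val
      = (ρ.toHom a).val := fun a => rfl
  have hBA : ψ.comp φs = NonUnitalStarAlgHom.id ℂ C.carrier :=
    (hC.2.2 C ρ).unique hcomp hid
  -- Step C : φs ∘ ψ = id
  have hPcomp : StarExtendsRep (φs.comp ψ) κ κ := by
    constructor
    · intro x
      show (φs (ψ ⟨(κ.toRep.v x).val, (κ.toRep.v x).property⟩)).val = (κ.toRep.v x).val
      have h2 : ψ ⟨(κ.toRep.v x).val, (κ.toRep.v x).property⟩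
          = ConcCStar.el (ρ.toHom (ι.v x)) := Subtype.ext (hψ.1 x)
      rw [h2, hφs (ι.v x)]
      exact congrArg Subtype.val (hχ.1 x)
    · intro x
      cases x with
      | inl y =>
        show (φs (ψ ⟨(κ.toRep.e (Sum.inl y)).val, (κ.toRep.e (Sum.inl y)).property⟩)).val
          = (κ.toRep.e (Sum.inl y)).val
        have h2 : ψ ⟨(κ.toRep.e (Sum.inl y)).val, (κ.toRep.e (Sum.inl y)).property⟩
            = ConcCStar.el (ρ.toHom (ι.e y)) := Subtype.ext (hψ.2 (Sum.inl y))
        rw [h2, hφs (ι.e y)]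
        exact congrArg Subtype.val (hχ.2 y)
      | inr y =>
        show (φs (ψ ⟨(κ.toRep.e (Sum.inr y)).val, (κ.toRep.e (Sum.inr y)).property⟩)).val
          = (κ.toRep.e (Sum.inr y)).val
        have h3 : (⟨(κ.toRep.e (Sum.inr y)).val, (κ.toRep.e (Sum.inr y)).property⟩ : G.carrier)
            = star ⟨(κ.toRep.e (Sum.inl y)).val, (κ.toRep.e (Sum.inl y)).property⟩ :=
          Subtype.ext (κ.star_eq y).symm
        rw [h3, map_star, map_star]
        have h4 : (φs (ψ ⟨(κ.toRep.e (Sum.inl y)).val,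
            (κ.toRep.e (Sum.inl y)).property⟩)).val = (κ.toRep.e (Sum.inl y)).val := by
          have h2 : ψ ⟨(κ.toRep.e (Sum.inl y)).val, (κ.toRep.e (Sum.inl y)).property⟩
              = ConcCStar.el (ρ.toHom (ι.e y)) := Subtype.ext (hψ.2 (Sum.inl y))
          rw [h2, hφs (ι.e y)]
          exact congrArg Subtype.val (hχ.2 y)
        show star ((φs (ψ ⟨(κ.toRep.e (Sum.inl y)).val,
            (κ.toRep.e (Sum.inl y)).property⟩)).val) = (κ.toRep.e (Sum.inr y)).val
        rw [h4]; exact κ.star_eq y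
  have hPid : StarExtendsRep (NonUnitalStarAlgHom.id ℂ G.carrier) κ κ :=
    ⟨fun _ => rfl, fun _ => rfl⟩
  have hCA : φs.comp ψ = NonUnitalStarAlgHom.id ℂ G.carrier :=
    (hG.2 G κ).unique hPcomp hPid
  refine ⟨ψ, ?_, ?_⟩
  · intro a b hab
    have ha := DFunLike.congr_fun hCA a
    have hb := DFunLike.congr_fun hCA b
    simp only [NonUnitalStarAlgHom.comp_apply, NonUnitalStarAlgHom.coe_id, id_eq] at ha hb
    rw [← ha, ← hb, hab]
  · intro c
    refine ⟨φs c, ?_⟩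
    have hc := DFunLike.congr_fun hBA c
    simpa only [NonUnitalStarAlgHom.comp_apply, NonUnitalStarAlgHom.coe_id, id_eq] using hc


end
end

section
/- Let Q₁ and Q₂ be finite directed graphs and let R be a collection of common vertices, R ⊆ V(Q₁) ∩ V(Q₂). Then GC*_m(Q₁ *_R Q₂) is *-isomorphic to the amalgamated free product of C*-algebras GC*_m(Q₁) *_{ℂ * ℂ * ⋯ * ℂ} GC*_m(Q₂), where the amalgamation is over the unamalgamated free product of |R| copies of ℂ. -/
noncomputable section

open scoped Classical

/-- The graph with vertex set `R` and no edges. -/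
def vertexGraph (R : Type) : DiGraph := ⟨R, Empty, Empty.elim, Empty.elim⟩

/-- The inclusion of a vertex set into a graph, as a graph homomorphism. -/
def vertexIncl {Q : DiGraph} {R : Type} (m : R → Q.V) : GraphHom (vertexGraph R) Q :=
  ⟨m, Empty.elim, fun e => e.elim, fun e => e.elim⟩

/-- `(F, iA, iB)` is the universal C*-algebraic free product of `A` and `B`
amalgamated over `D` (embedded via the `*`-homomorphisms `jA` and `jB`). -/
def IsCStarAmalgFreeProduct (D A B F : ConcCStar) (jA : StarHom D A) (jB : StarHom D B)
    (iA : StarHom A F) (iB : StarHom B F) : Prop :=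
  (∀ d, iA (jA d) = iB (jB d)) ∧
  closure ((NonUnitalStarAlgebra.adjoin ℂ
      ((Set.range iA ∪ Set.range iB : Set F.carrier)) :
    NonUnitalStarSubalgebra ℂ F.carrier) : Set F.carrier) = Set.univ ∧
  ∀ (C : ConcCStar) (φA : StarHom A C) (φB : StarHom B C),
    (∀ d, φA (jA d) = φB (jB d)) →
    ∃! ψ : StarHom F C, (∀ a, ψ (iA a) = φA a) ∧ (∀ b, ψ (iB b) = φB b)
namespace AuxS10

open ConcCStar

variable {C D E : ConcCStar}

/-- Push an element of the underlying operator algebra along a star hom. -/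
def cPush (φ : StarHom C D) (x : C.toOpAlg.carrier) : D.toOpAlg.carrier :=
  ⟨(φ (ConcCStar.el x)).val, (φ (ConcCStar.el x)).property⟩

lemma cPush_val (φ : StarHom C D) (x : C.toOpAlg.carrier) :
    (cPush φ x).val = (φ (ConcCStar.el x)).val := rfl

lemma el_mul (x y : C.toOpAlg.carrier) :
    ConcCStar.el (x * y) = ConcCStar.el x * ConcCStar.el y := rfl

lemma cPush_mul (φ : StarHom C D) (x y : C.toOpAlg.carrier) :
    cPush φ (x * y) = cPush φ x * cPush φ y := by
  apply Subtype.ext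
  show (φ (ConcCStar.el (x * y))).val = ((φ (ConcCStar.el x)) * (φ (ConcCStar.el y))).val
  rw [el_mul, map_mul]

lemma star_cPush_val (φ : StarHom C D) (x : C.toOpAlg.carrier) :
    star ((cPush φ x).val) = (φ (star (ConcCStar.el x))).val := by
  rw [map_star]; rfl

lemma cPush_norm_le (φ : StarHom C D) (x : C.toOpAlg.carrier) :
    ‖(cPush φ x).val‖ ≤ ‖x.val‖ := by
  haveI : IsClosed (C.carrier : Set (C.H →L[ℂ] C.H)) := C.isClosed
  haveI : IsClosed (D.carrier : Set (D.H →L[ℂ] D.H)) := D.isClosed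
  exact NonUnitalStarAlgHom.norm_apply_le φ (ConcCStar.el x)

lemma cPush_cPush (φ : StarHom C D) (ψ : StarHom D E) (x : C.toOpAlg.carrier) :
    cPush ψ (cPush φ x) = cPush (ψ.comp φ) x := rfl

/-- Push a star representation along a star hom. -/
def pushRep {Q : DiGraph} (φ : StarHom C D) (ρ : StarRep Q C) : StarRep Q D where
  toRep :=
  { v := fun x => cPush φ (ρ.toRep.v x)
    e := fun x => cPush φ (ρ.toRep.e x)
    idem := fun x => by rw [← cPush_mul, ρ.toRep.idem]
    selfAdjoint := fun x => by
      show star _ = _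
      rw [star_cPush_val]
      have h : star (ConcCStar.el (ρ.toRep.v x)) = ConcCStar.el (ρ.toRep.v x) :=
        Subtype.ext (ρ.toRep.selfAdjoint x)
      rw [h]; rfl
    contractive := fun x => le_trans (cPush_norm_le φ _) (ρ.toRep.contractive x)
    range_mul := fun x => by rw [← cPush_mul, ρ.toRep.range_mul]
    mul_source := fun x => by rw [← cPush_mul, ρ.toRep.mul_source] }
  star_eq := fun x => by
    show star ((cPush φ (ρ.toRep.e (Sum.inl x))).val) = _
    rw [star_cPush_val]
    have h : star (ConcCStar.el (ρ.toRep.e (Sum.inl x))) =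
        ConcCStar.el (ρ.toRep.e (Sum.inr x)) := Subtype.ext (ρ.star_eq x)
    rw [h]; rfl

lemma extends_push {Q : DiGraph} (φ : StarHom C D) (ρ : StarRep Q C) :
    StarExtendsRep φ ρ (pushRep φ ρ) :=
  ⟨fun _ => rfl, fun _ => rfl⟩

end AuxS10
namespace AuxS10

variable {Q₁ Q₂ : DiGraph} {R : Type} {C D : ConcCStar}

/-- Abbreviation for the free product graph. -/
abbrev FP (m₁ : R → Q₁.V) (m₂ : R → Q₂.V) : DiGraph :=
  GraphFreeProd Q₁ Q₂ (vertexGraph R) (vertexIncl m₁) (vertexIncl m₂)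

variable (m₁ : R → Q₁.V) (m₂ : R → Q₂.V)

def vmap₁ (v : Q₁.V) : (FP m₁ m₂).V :=
  if h : v ∈ Set.range m₁ then .inr (.inr h.choose) else .inl ⟨v, h⟩

def vmap₂ (v : Q₂.V) : (FP m₁ m₂).V :=
  if h : v ∈ Set.range m₂ then .inr (.inr h.choose) else .inr (.inl ⟨v, h⟩)

def emap₁ (e : Q₁.E) : (FP m₁ m₂).E := .inl ⟨e, fun h => h.choose.elim⟩
def emap₂ (e : Q₂.E) : (FP m₁ m₂).E := .inr (.inl ⟨e, fun h => h.choose.elim⟩)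

lemma fp_s_emap₁ (e : Q₁.E) : (FP m₁ m₂).s (emap₁ m₁ m₂ e) = vmap₁ m₁ m₂ (Q₁.s e) := rfl
lemma fp_r_emap₁ (e : Q₁.E) : (FP m₁ m₂).r (emap₁ m₁ m₂ e) = vmap₁ m₁ m₂ (Q₁.r e) := rfl
lemma fp_s_emap₂ (e : Q₂.E) : (FP m₁ m₂).s (emap₂ m₁ m₂ e) = vmap₂ m₁ m₂ (Q₂.s e) := rfl
lemma fp_r_emap₂ (e : Q₂.E) : (FP m₁ m₂).r (emap₂ m₁ m₂ e) = vmap₂ m₁ m₂ (Q₂.r e) := rfl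

lemma vmap₁_m₁ (hm₁ : Function.Injective m₁) (x : R) :
    vmap₁ m₁ m₂ (m₁ x) = .inr (.inr x) := by
  have h : m₁ x ∈ Set.range m₁ := ⟨x, rfl⟩
  rw [vmap₁]
  exact (dif_pos h).trans (congrArg (fun y => Sum.inr (Sum.inr y)) (hm₁ h.choose_spec))

lemma vmap₂_m₂ (hm₂ : Function.Injective m₂) (x : R) :
    vmap₂ m₁ m₂ (m₂ x) = .inr (.inr x) := by
  have h : m₂ x ∈ Set.range m₂ := ⟨x, rfl⟩
  rw [vmap₂]
  exact (dif_pos h).trans (congrArg (fun y => Sum.inr (Sum.inr y)) (hm₂ h.choose_spec))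

/-- Restriction of a star rep of the free product graph to `Q₁`. -/
def restrict₁ (σ : StarRep (FP m₁ m₂) C) : StarRep Q₁ C where
  toRep :=
  { v := fun x => σ.toRep.v (vmap₁ m₁ m₂ x)
    e := fun x => σ.toRep.e (Sum.map (emap₁ m₁ m₂) (emap₁ m₁ m₂) x)
    idem := fun x => σ.toRep.idem _
    selfAdjoint := fun x => σ.toRep.selfAdjoint _
    contractive := fun x => σ.toRep.contractive _
    range_mul := fun x => by
      cases x with
      | inl e => exact σ.toRep.range_mul (.inl (emap₁ m₁ m₂ e))
      | inr e => exact σ.toRep.range_mul (.inr (emap₁ m₁ m₂ e))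
    mul_source := fun x => by
      cases x with
      | inl e => exact σ.toRep.mul_source (.inl (emap₁ m₁ m₂ e))
      | inr e => exact σ.toRep.mul_source (.inr (emap₁ m₁ m₂ e)) }
  star_eq := fun x => σ.star_eq (emap₁ m₁ m₂ x)

/-- Restriction of a star rep of the free product graph to `Q₂`. -/
def restrict₂ (σ : StarRep (FP m₁ m₂) C) : StarRep Q₂ C where
  toRep :=
  { v := fun x => σ.toRep.v (vmap₂ m₁ m₂ x)
    e := fun x => σ.toRep.e (Sum.map (emap₂ m₁ m₂) (emap₂ m₁ m₂) x)
    idem := fun x => σ.toRep.idem _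
    selfAdjoint := fun x => σ.toRep.selfAdjoint _
    contractive := fun x => σ.toRep.contractive _
    range_mul := fun x => by
      cases x with
      | inl e => exact σ.toRep.range_mul (.inl (emap₂ m₁ m₂ e))
      | inr e => exact σ.toRep.range_mul (.inr (emap₂ m₁ m₂ e))
    mul_source := fun x => by
      cases x with
      | inl e => exact σ.toRep.mul_source (.inl (emap₂ m₁ m₂ e))
      | inr e => exact σ.toRep.mul_source (.inr (emap₂ m₁ m₂ e)) }
  star_eq := fun x => σ.star_eq (emap₂ m₁ m₂ x)

/-- Restriction of a star rep of the free product graph to the vertex graph on `R`. -/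
def restrictR (σ : StarRep (FP m₁ m₂) C) : StarRep (vertexGraph R) C where
  toRep :=
  { v := fun x => σ.toRep.v (.inr (.inr x))
    e := fun x => Sum.elim Empty.elim Empty.elim x
    idem := fun x => σ.toRep.idem _
    selfAdjoint := fun x => σ.toRep.selfAdjoint _
    contractive := fun x => by cases x with
      | inl a => exact a.elim
      | inr a => exact a.elim
    range_mul := fun x => by cases x with
      | inl a => exact a.elim
      | inr a => exact a.elim
    mul_source := fun x => by cases x with
      | inl a => exact a.elim
      | inr a => exact a.elim }
  star_eq := fun x => x.elim

end AuxS10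

namespace AuxS10
variable {Q₁ Q₂ : DiGraph} {R : Type}
variable (m₁ : R → Q₁.V) (m₂ : R → Q₂.V)

lemma vmap₁_not {v : Q₁.V} (hv : v ∉ Set.range m₁) :
    vmap₁ m₁ m₂ v = .inl ⟨v, hv⟩ := dif_neg hv

lemma vmap₂_not {v : Q₂.V} (hv : v ∉ Set.range m₂) :
    vmap₂ m₁ m₂ v = .inr (.inl ⟨v, hv⟩) := dif_neg hv

end AuxS10
namespace AuxS10

variable {Q₁ Q₂ : DiGraph} {R : Type} {C : ConcCStar}
variable (m₁ : R → Q₁.V) (m₂ : R → Q₂.V)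
variable (ρ₁ : StarRep Q₁ C) (ρ₂ : StarRep Q₂ C)

/-- The vertex map of the combined representation. -/
def cv : (FP m₁ m₂).V → C.toOpAlg.carrier := fun y =>
  match y with
  | .inl v => ρ₁.toRep.v v.1
  | .inr (.inl v) => ρ₂.toRep.v v.1
  | .inr (.inr x) => ρ₁.toRep.v (m₁ x)

/-- The edge map of the combined representation. -/
def ce : (FP m₁ m₂).doubled.E → C.toOpAlg.carrier := fun z =>
  match z with
  | .inl (.inl e) => ρ₁.toRep.e (.inl e.1)
  | .inl (.inr (.inl e)) => ρ₂.toRep.e (.inl e.1)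
  | .inl (.inr (.inr e)) => e.elim
  | .inr (.inl e) => ρ₁.toRep.e (.inr e.1)
  | .inr (.inr (.inl e)) => ρ₂.toRep.e (.inr e.1)
  | .inr (.inr (.inr e)) => e.elim

lemma cv_vmap₁ (v : Q₁.V) :
    cv m₁ m₂ ρ₁ ρ₂ (vmap₁ m₁ m₂ v) = ρ₁.toRep.v v := by
  rw [vmap₁]
  by_cases h : v ∈ Set.range m₁
  · refine (congrArg (cv m₁ m₂ ρ₁ ρ₂) (dif_pos h)).trans ?_
    show ρ₁.toRep.v (m₁ h.choose) = ρ₁.toRep.v v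
    rw [h.choose_spec]
  · refine (congrArg (cv m₁ m₂ ρ₁ ρ₂) (dif_neg h)).trans ?_
    rfl

lemma cv_vmap₂ (hag : ∀ x, ρ₁.toRep.v (m₁ x) = ρ₂.toRep.v (m₂ x)) (v : Q₂.V) :
    cv m₁ m₂ ρ₁ ρ₂ (vmap₂ m₁ m₂ v) = ρ₂.toRep.v v := by
  rw [vmap₂]
  by_cases h : v ∈ Set.range m₂
  · refine (congrArg (cv m₁ m₂ ρ₁ ρ₂) (dif_pos h)).trans ?_
    show ρ₁.toRep.v (m₁ h.choose) = ρ₂.toRep.v v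
    rw [hag h.choose, h.choose_spec]
  · refine (congrArg (cv m₁ m₂ ρ₁ ρ₂) (dif_neg h)).trans ?_
    rfl

/-- Combine star reps of `Q₁` and `Q₂` that agree on `R` into a star rep of the
free product graph. -/
def combineRep (hag : ∀ x, ρ₁.toRep.v (m₁ x) = ρ₂.toRep.v (m₂ x)) :
    StarRep (FP m₁ m₂) C where
  toRep :=
  { v := cv m₁ m₂ ρ₁ ρ₂
    e := ce m₁ m₂ ρ₁ ρ₂
    idem := fun y => by
      match y with
      | .inl v => exact ρ₁.toRep.idem v.1
      | .inr (.inl v) => exact ρ₂.toRep.idem v.1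
      | .inr (.inr x) => exact ρ₁.toRep.idem (m₁ x)
    selfAdjoint := fun y => by
      match y with
      | .inl v => exact ρ₁.toRep.selfAdjoint v.1
      | .inr (.inl v) => exact ρ₂.toRep.selfAdjoint v.1
      | .inr (.inr x) => exact ρ₁.toRep.selfAdjoint (m₁ x)
    contractive := fun z => by
      match z with
      | .inl (.inl e) => exact ρ₁.toRep.contractive (.inl e.1)
      | .inl (.inr (.inl e)) => exact ρ₂.toRep.contractive (.inl e.1)
      | .inl (.inr (.inr e)) => exact e.elim
      | .inr (.inl e) => exact ρ₁.toRep.contractive (.inr e.1)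
      | .inr (.inr (.inl e)) => exact ρ₂.toRep.contractive (.inr e.1)
      | .inr (.inr (.inr e)) => exact e.elim
    range_mul := fun z => by
      match z with
      | .inl (.inl e) =>
        show cv m₁ m₂ ρ₁ ρ₂ (vmap₁ m₁ m₂ (Q₁.r e.1)) * ρ₁.toRep.e (.inl e.1) = _
        rw [cv_vmap₁]
        exact ρ₁.toRep.range_mul (.inl e.1)
      | .inl (.inr (.inl e)) =>
        show cv m₁ m₂ ρ₁ ρ₂ (vmap₂ m₁ m₂ (Q₂.r e.1)) * ρ₂.toRep.e (.inl e.1) = _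
        rw [cv_vmap₂ m₁ m₂ ρ₁ ρ₂ hag]
        exact ρ₂.toRep.range_mul (.inl e.1)
      | .inl (.inr (.inr e)) => exact e.elim
      | .inr (.inl e) =>
        show cv m₁ m₂ ρ₁ ρ₂ (vmap₁ m₁ m₂ (Q₁.s e.1)) * ρ₁.toRep.e (.inr e.1) = _
        rw [cv_vmap₁]
        exact ρ₁.toRep.range_mul (.inr e.1)
      | .inr (.inr (.inl e)) =>
        show cv m₁ m₂ ρ₁ ρ₂ (vmap₂ m₁ m₂ (Q₂.s e.1)) * ρ₂.toRep.e (.inr e.1) = _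
        rw [cv_vmap₂ m₁ m₂ ρ₁ ρ₂ hag]
        exact ρ₂.toRep.range_mul (.inr e.1)
      | .inr (.inr (.inr e)) => exact e.elim
    mul_source := fun z => by
      match z with
      | .inl (.inl e) =>
        show ρ₁.toRep.e (.inl e.1) * cv m₁ m₂ ρ₁ ρ₂ (vmap₁ m₁ m₂ (Q₁.s e.1)) = _
        rw [cv_vmap₁]
        exact ρ₁.toRep.mul_source (.inl e.1)
      | .inl (.inr (.inl e)) =>
        show ρ₂.toRep.e (.inl e.1) * cv m₁ m₂ ρ₁ ρ₂ (vmap₂ m₁ m₂ (Q₂.s e.1)) = _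
        rw [cv_vmap₂ m₁ m₂ ρ₁ ρ₂ hag]
        exact ρ₂.toRep.mul_source (.inl e.1)
      | .inl (.inr (.inr e)) => exact e.elim
      | .inr (.inl e) =>
        show ρ₁.toRep.e (.inr e.1) * cv m₁ m₂ ρ₁ ρ₂ (vmap₁ m₁ m₂ (Q₁.r e.1)) = _
        rw [cv_vmap₁]
        exact ρ₁.toRep.mul_source (.inr e.1)
      | .inr (.inr (.inl e)) =>
        show ρ₂.toRep.e (.inr e.1) * cv m₁ m₂ ρ₁ ρ₂ (vmap₂ m₁ m₂ (Q₂.r e.1)) = _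
        rw [cv_vmap₂ m₁ m₂ ρ₁ ρ₂ hag]
        exact ρ₂.toRep.mul_source (.inr e.1)
      | .inr (.inr (.inr e)) => exact e.elim }
  star_eq := fun x => by
    match x with
    | .inl e => exact ρ₁.star_eq e.1
    | .inr (.inl e) => exact ρ₂.star_eq e.1
    | .inr (.inr e) => exact e.elim

end AuxS10

namespace AuxS10

variable {Q₁ Q₂ : DiGraph} {R : Type} {C : ConcCStar}
variable (m₁ : R → Q₁.V) (m₂ : R → Q₂.V)
variable (ρ₁ : StarRep Q₁ C) (ρ₂ : StarRep Q₂ C)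

lemma ce_map₁ (z : Q₁.doubled.E) :
    ce m₁ m₂ ρ₁ ρ₂ (Sum.map (emap₁ m₁ m₂) (emap₁ m₁ m₂) z) = ρ₁.toRep.e z := by
  cases z <;> rfl

lemma ce_map₂ (z : Q₂.doubled.E) :
    ce m₁ m₂ ρ₁ ρ₂ (Sum.map (emap₂ m₁ m₂) (emap₂ m₁ m₂) z) = ρ₂.toRep.e z := by
  cases z <;> rfl

end AuxS10

open AuxS10
set_option maxHeartbeats 1000000


/-- For finite graphs `Q₁, Q₂` and a common collection `R` of
vertices, `GC*ₘ(Q₁ *_R Q₂)` is `*`-isomorphic to the free product of `GC*ₘ(Q₁)` and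
`GC*ₘ(Q₂)` amalgamated over `GC*ₘ` of the vertex graph on `R` (which is the
unamalgamated free product of `|R|` copies of `ℂ`), with respect to the canonical
embeddings. -/
theorem universal_graph_CStar_amalgamated_free_product :
    ∀ (Q₁ Q₂ : DiGraph), Finite Q₁.V → Finite Q₁.E → Finite Q₂.V → Finite Q₂.E →
    ∀ (R : Type) (m₁ : R → Q₁.V) (m₂ : R → Q₂.V),
      Function.Injective m₁ → Function.Injective m₂ →
    ∀ (G : ConcCStar)
      (κ : StarRep (GraphFreeProd Q₁ Q₂ (vertexGraph R) (vertexIncl m₁) (vertexIncl m₂)) G),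
      IsUniversalGCm (GraphFreeProd Q₁ Q₂ (vertexGraph R) (vertexIncl m₁) (vertexIncl m₂)) G κ →
    ∀ (G₁ : ConcCStar) (κ₁ : StarRep Q₁ G₁), IsUniversalGCm Q₁ G₁ κ₁ →
    ∀ (G₂ : ConcCStar) (κ₂ : StarRep Q₂ G₂), IsUniversalGCm Q₂ G₂ κ₂ →
    ∀ (GR : ConcCStar) (κR : StarRep (vertexGraph R) GR),
      IsUniversalGCm (vertexGraph R) GR κR →
    ∀ (jA : StarHom GR G₁),
      (∀ x : R, (jA (ConcCStar.el (κR.toRep.v x))).val = (κ₁.toRep.v (m₁ x)).val) →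
    ∀ (jB : StarHom GR G₂),
      (∀ x : R, (jB (ConcCStar.el (κR.toRep.v x))).val = (κ₂.toRep.v (m₂ x)).val) →
      (∃ iA : StarHom G₁ G, ∃ iB : StarHom G₂ G,
        IsCStarAmalgFreeProduct GR G₁ G₂ G jA jB iA iB) ∧
      (∀ (F : ConcCStar) (iA : StarHom G₁ F) (iB : StarHom G₂ F),
        IsCStarAmalgFreeProduct GR G₁ G₂ F jA jB iA iB →
        ∃ ψ : StarHom G F, Function.Bijective ψ) := by
  intro Q₁ Q₂ _ _ _ _ R m₁ m₂ hm₁ hm₂ G κ hG G₁ κ₁ hG₁ G₂ κ₂ hG₂ GR κR hGR jA hjA jB hjB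
  -- the canonical embeddings of `G₁` and `G₂` into `G`
  obtain ⟨iA, hiA, hiAu⟩ := hG₁.2 G (restrict₁ m₁ m₂ κ)
  obtain ⟨iB, hiB, hiBu⟩ := hG₂.2 G (restrict₂ m₁ m₂ κ)
  -- key computations for `iA` and `iB` at vertices and edges
  have hiAv : ∀ v : Q₁.V,
      (iA (ConcCStar.el (κ₁.toRep.v v))).val = (κ.toRep.v (vmap₁ m₁ m₂ v)).val :=
    fun v => hiA.1 v
  have hiBv : ∀ v : Q₂.V,
      (iB (ConcCStar.el (κ₂.toRep.v v))).val = (κ.toRep.v (vmap₂ m₁ m₂ v)).val :=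
    fun v => hiB.1 v
  have hiAe : ∀ z : Q₁.doubled.E,
      (iA (ConcCStar.el (κ₁.toRep.e z))).val =
        (κ.toRep.e (Sum.map (emap₁ m₁ m₂) (emap₁ m₁ m₂) z)).val :=
    fun z => hiA.2 z
  have hiBe : ∀ z : Q₂.doubled.E,
      (iB (ConcCStar.el (κ₂.toRep.e z))).val =
        (κ.toRep.e (Sum.map (emap₂ m₁ m₂) (emap₂ m₁ m₂) z)).val :=
    fun z => hiB.2 z
  have hiAR : ∀ x : R,
      (iA (ConcCStar.el (κ₁.toRep.v (m₁ x)))).val =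
        (κ.toRep.v (Sum.inr (Sum.inr x))).val := by
    intro x
    rw [hiAv (m₁ x), vmap₁_m₁ m₁ m₂ hm₁ x]
  have hiBR : ∀ x : R,
      (iB (ConcCStar.el (κ₂.toRep.v (m₂ x)))).val =
        (κ.toRep.v (Sum.inr (Sum.inr x))).val := by
    intro x
    rw [hiBv (m₂ x), vmap₂_m₂ m₁ m₂ hm₂ x]
  -- the two embeddings agree on `GR`
  have hAgree : ∀ d, iA (jA d) = iB (jB d) := by
    have extA : StarExtendsRep (iA.comp jA) κR (restrictR m₁ m₂ κ) := by
      constructor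
      · intro x
        show (iA (jA (ConcCStar.el (κR.toRep.v x)))).val =
          (κ.toRep.v (Sum.inr (Sum.inr x))).val
        rw [show jA (ConcCStar.el (κR.toRep.v x)) = ConcCStar.el (κ₁.toRep.v (m₁ x)) from
          Subtype.ext (hjA x)]
        exact hiAR x
      · intro z
        cases z with
        | inl a => exact a.elim
        | inr a => exact a.elim
    have extB : StarExtendsRep (iB.comp jB) κR (restrictR m₁ m₂ κ) := by
      constructor
      · intro x
        show (iB (jB (ConcCStar.el (κR.toRep.v x)))).val =
          (κ.toRep.v (Sum.inr (Sum.inr x))).val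
        rw [show jB (ConcCStar.el (κR.toRep.v x)) = ConcCStar.el (κ₂.toRep.v (m₂ x)) from
          Subtype.ext (hjB x)]
        exact hiBR x
      · intro z
        cases z with
        | inl a => exact a.elim
        | inr a => exact a.elim
    obtain ⟨ψR, _, hψRu⟩ := hGR.2 G (restrictR m₁ m₂ κ)
    have h := (hψRu _ extA).trans (hψRu _ extB).symm
    exact fun d => DFunLike.congr_fun h d
  -- the generating property for `(G, iA, iB)`
  have hGen : closure ((NonUnitalStarAlgebra.adjoin ℂ
      ((Set.range iA ∪ Set.range iB : Set G.carrier)) :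
    NonUnitalStarSubalgebra ℂ G.carrier) : Set G.carrier) = Set.univ := by
    apply Set.eq_univ_of_univ_subset
    rw [← hG.1]
    apply closure_mono
    apply SetLike.coe_subset_coe.mpr
    apply NonUnitalStarAlgebra.adjoin_le
    rintro t (⟨y, rfl⟩ | ⟨z, rfl⟩)
    · apply NonUnitalStarAlgebra.subset_adjoin
      match y with
      | .inl v =>
        exact Or.inl ⟨ConcCStar.el (κ₁.toRep.v v.1),
          Subtype.ext ((hiAv v.1).trans
            (congrArg (fun w => (κ.toRep.v w).val) (vmap₁_not m₁ m₂ v.2)))⟩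
      | .inr (.inl v) =>
        exact Or.inr ⟨ConcCStar.el (κ₂.toRep.v v.1),
          Subtype.ext ((hiBv v.1).trans
            (congrArg (fun w => (κ.toRep.v w).val) (vmap₂_not m₁ m₂ v.2)))⟩
      | .inr (.inr x) =>
        exact Or.inl ⟨ConcCStar.el (κ₁.toRep.v (m₁ x)), Subtype.ext (hiAR x)⟩
    · apply NonUnitalStarAlgebra.subset_adjoin
      match z with
      | .inl (.inl e) =>
        exact Or.inl ⟨ConcCStar.el (κ₁.toRep.e (.inl e.1)),
          Subtype.ext (hiAe (.inl e.1))⟩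
      | .inl (.inr (.inl e)) =>
        exact Or.inr ⟨ConcCStar.el (κ₂.toRep.e (.inl e.1)),
          Subtype.ext (hiBe (.inl e.1))⟩
      | .inl (.inr (.inr a)) => exact a.elim
      | .inr (.inl e) =>
        exact Or.inl ⟨ConcCStar.el (κ₁.toRep.e (.inr e.1)),
          Subtype.ext (hiAe (.inr e.1))⟩
      | .inr (.inr (.inl e)) =>
        exact Or.inr ⟨ConcCStar.el (κ₂.toRep.e (.inr e.1)),
          Subtype.ext (hiBe (.inr e.1))⟩
      | .inr (.inr (.inr a)) => exact a.elim
  -- the universal property for `(G, iA, iB)`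
  have huniv : ∀ (C : ConcCStar) (φA : StarHom G₁ C) (φB : StarHom G₂ C),
      (∀ d, φA (jA d) = φB (jB d)) →
      ∃! ψ : StarHom G C, (∀ a, ψ (iA a) = φA a) ∧ (∀ b, ψ (iB b) = φB b) := by
    intro C φA φB hphi
    have hag : ∀ x, (pushRep φA κ₁).toRep.v (m₁ x) = (pushRep φB κ₂).toRep.v (m₂ x) := by
      intro x
      apply Subtype.ext
      show (φA (ConcCStar.el (κ₁.toRep.v (m₁ x)))).val =
        (φB (ConcCStar.el (κ₂.toRep.v (m₂ x)))).val
      rw [show ConcCStar.el (κ₁.toRep.v (m₁ x)) = jA (ConcCStar.el (κR.toRep.v x)) from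
            Subtype.ext (hjA x).symm,
          show ConcCStar.el (κ₂.toRep.v (m₂ x)) = jB (ConcCStar.el (κR.toRep.v x)) from
            Subtype.ext (hjB x).symm,
          hphi]
    obtain ⟨ψ, hψ, hψu⟩ :=
      hG.2 C (combineRep m₁ m₂ (pushRep φA κ₁) (pushRep φB κ₂) hag)
    have extA : StarExtendsRep (ψ.comp iA) κ₁ (pushRep φA κ₁) := by
      constructor
      · intro v
        show (ψ (iA (ConcCStar.el (κ₁.toRep.v v)))).val = ((pushRep φA κ₁).toRep.v v).val
        rw [show iA (ConcCStar.el (κ₁.toRep.v v)) =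
            ConcCStar.el (κ.toRep.v (vmap₁ m₁ m₂ v)) from Subtype.ext (hiAv v)]
        exact (hψ.1 (vmap₁ m₁ m₂ v)).trans
          (congrArg Subtype.val (cv_vmap₁ m₁ m₂ (pushRep φA κ₁) (pushRep φB κ₂) v))
      · intro z
        show (ψ (iA (ConcCStar.el (κ₁.toRep.e z)))).val = ((pushRep φA κ₁).toRep.e z).val
        rw [show iA (ConcCStar.el (κ₁.toRep.e z)) =
            ConcCStar.el (κ.toRep.e (Sum.map (emap₁ m₁ m₂) (emap₁ m₁ m₂) z)) from
            Subtype.ext (hiAe z)]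
        exact (hψ.2 _).trans
          (congrArg Subtype.val (ce_map₁ m₁ m₂ (pushRep φA κ₁) (pushRep φB κ₂) z))
    have extB : StarExtendsRep (ψ.comp iB) κ₂ (pushRep φB κ₂) := by
      constructor
      · intro v
        show (ψ (iB (ConcCStar.el (κ₂.toRep.v v)))).val = ((pushRep φB κ₂).toRep.v v).val
        rw [show iB (ConcCStar.el (κ₂.toRep.v v)) =
            ConcCStar.el (κ.toRep.v (vmap₂ m₁ m₂ v)) from Subtype.ext (hiBv v)]
        exact (hψ.1 (vmap₂ m₁ m₂ v)).trans
          (congrArg Subtype.val (cv_vmap₂ m₁ m₂ (pushRep φA κ₁) (pushRep φB κ₂) hag v))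
      · intro z
        show (ψ (iB (ConcCStar.el (κ₂.toRep.e z)))).val = ((pushRep φB κ₂).toRep.e z).val
        rw [show iB (ConcCStar.el (κ₂.toRep.e z)) =
            ConcCStar.el (κ.toRep.e (Sum.map (emap₂ m₁ m₂) (emap₂ m₁ m₂) z)) from
            Subtype.ext (hiBe z)]
        exact (hψ.2 _).trans
          (congrArg Subtype.val (ce_map₂ m₁ m₂ (pushRep φA κ₁) (pushRep φB κ₂) z))
    obtain ⟨χA, _, hχAu⟩ := hG₁.2 C (pushRep φA κ₁)
    obtain ⟨χB, _, hχBu⟩ := hG₂.2 C (pushRep φB κ₂)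
    have keyA : ∀ a, ψ (iA a) = φA a := fun a =>
      DFunLike.congr_fun ((hχAu _ extA).trans (hχAu _ (extends_push φA κ₁)).symm) a
    have keyB : ∀ b, ψ (iB b) = φB b := fun b =>
      DFunLike.congr_fun ((hχBu _ extB).trans (hχBu _ (extends_push φB κ₂)).symm) b
    refine ⟨ψ, ⟨keyA, keyB⟩, ?_⟩
    rintro ψ' ⟨hA', hB'⟩
    apply hψu
    constructor
    · intro y
      match y with
      | .inl v =>
        show (ψ' (ConcCStar.el (κ.toRep.v (.inl v)))).val =
          ((pushRep φA κ₁).toRep.v v.1).val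
        rw [show ConcCStar.el (κ.toRep.v (.inl v)) = iA (ConcCStar.el (κ₁.toRep.v v.1)) from
          Subtype.ext (((hiAv v.1).trans
            (congrArg (fun w => (κ.toRep.v w).val) (vmap₁_not m₁ m₂ v.2))).symm)]
        exact congrArg Subtype.val (hA' _)
      | .inr (.inl v) =>
        show (ψ' (ConcCStar.el (κ.toRep.v (.inr (.inl v))))).val =
          ((pushRep φB κ₂).toRep.v v.1).val
        rw [show ConcCStar.el (κ.toRep.v (.inr (.inl v))) =
            iB (ConcCStar.el (κ₂.toRep.v v.1)) from
          Subtype.ext (((hiBv v.1).trans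
            (congrArg (fun w => (κ.toRep.v w).val) (vmap₂_not m₁ m₂ v.2))).symm)]
        exact congrArg Subtype.val (hB' _)
      | .inr (.inr x) =>
        show (ψ' (ConcCStar.el (κ.toRep.v (.inr (.inr x))))).val =
          ((pushRep φA κ₁).toRep.v (m₁ x)).val
        rw [show ConcCStar.el (κ.toRep.v (.inr (.inr x))) =
            iA (ConcCStar.el (κ₁.toRep.v (m₁ x))) from Subtype.ext (hiAR x).symm]
        exact congrArg Subtype.val (hA' _)
    · intro z
      match z with
      | .inl (.inl e) =>
        show (ψ' (ConcCStar.el (κ.toRep.e (.inl (.inl e))))).val =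
          ((pushRep φA κ₁).toRep.e (.inl e.1)).val
        rw [show ConcCStar.el (κ.toRep.e (.inl (.inl e))) =
            iA (ConcCStar.el (κ₁.toRep.e (.inl e.1))) from
          Subtype.ext (hiAe (.inl e.1)).symm]
        exact congrArg Subtype.val (hA' _)
      | .inl (.inr (.inl e)) =>
        show (ψ' (ConcCStar.el (κ.toRep.e (.inl (.inr (.inl e)))))).val =
          ((pushRep φB κ₂).toRep.e (.inl e.1)).val
        rw [show ConcCStar.el (κ.toRep.e (.inl (.inr (.inl e)))) =
            iB (ConcCStar.el (κ₂.toRep.e (.inl e.1))) from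
          Subtype.ext (hiBe (.inl e.1)).symm]
        exact congrArg Subtype.val (hB' _)
      | .inl (.inr (.inr a)) => exact a.elim
      | .inr (.inl e) =>
        show (ψ' (ConcCStar.el (κ.toRep.e (.inr (.inl e))))).val =
          ((pushRep φA κ₁).toRep.e (.inr e.1)).val
        rw [show ConcCStar.el (κ.toRep.e (.inr (.inl e))) =
            iA (ConcCStar.el (κ₁.toRep.e (.inr e.1))) from
          Subtype.ext (hiAe (.inr e.1)).symm]
        exact congrArg Subtype.val (hA' _)
      | .inr (.inr (.inl e)) =>
        show (ψ' (ConcCStar.el (κ.toRep.e (.inr (.inr (.inl e)))))).val =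
          ((pushRep φB κ₂).toRep.e (.inr e.1)).val
        rw [show ConcCStar.el (κ.toRep.e (.inr (.inr (.inl e)))) =
            iB (ConcCStar.el (κ₂.toRep.e (.inr e.1))) from
          Subtype.ext (hiBe (.inr e.1)).symm]
        exact congrArg Subtype.val (hB' _)
      | .inr (.inr (.inr a)) => exact a.elim
  refine ⟨⟨iA, iB, hAgree, hGen, huniv⟩, ?_⟩
  -- part 2: uniqueness of the amalgamated free product
  intro F iA' iB' hF
  obtain ⟨ψ, hψ, _⟩ := huniv F iA' iB' hF.1
  obtain ⟨χ, hχ, _⟩ := hF.2.2 G iA iB hAgree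
  obtain ⟨θ, _, hθu⟩ := huniv G iA iB hAgree
  obtain ⟨θ', _, hθ'u⟩ := hF.2.2 F iA' iB' hF.1
  have h1 : χ.comp ψ = θ := hθu _
    ⟨fun a => by show χ (ψ (iA a)) = iA a; rw [hψ.1 a, hχ.1 a],
     fun b => by show χ (ψ (iB b)) = iB b; rw [hψ.2 b, hχ.2 b]⟩
  have h2 : NonUnitalStarAlgHom.id ℂ G.carrier = θ := hθu _
    ⟨fun _ => rfl, fun _ => rfl⟩
  have h3 : ψ.comp χ = θ' := hθ'u _
    ⟨fun a => by show ψ (χ (iA' a)) = iA' a; rw [hχ.1 a, hψ.1 a],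
     fun b => by show ψ (χ (iB' b)) = iB' b; rw [hχ.2 b, hψ.2 b]⟩
  have h4 : NonUnitalStarAlgHom.id ℂ F.carrier = θ' := hθ'u _
    ⟨fun _ => rfl, fun _ => rfl⟩
  have hGid : ∀ g, χ (ψ g) = g := fun g =>
    DFunLike.congr_fun (h1.trans h2.symm) g
  have hFid : ∀ f, ψ (χ f) = f := fun f =>
    DFunLike.congr_fun (h3.trans h4.symm) f
  exact ⟨ψ, Function.LeftInverse.injective hGid, Function.RightInverse.surjective hFid⟩

end
end
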